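/- arXiv:1903.02848 — 10 statements merged into one kernel-verified Lean document; each statement's English description precedes it below -/
import Mathlib

section
/- Let V be a finite-dimensional real vector space with a nondegenerate symmetric bilinear form ⟨·,·⟩, 𝔤 ⊆ V a Lagrangian subspace, and j: 𝔤* → V an isotropic splitting. For a subspace 𝓔₊ ⊆ V the following are equivalent: (a) dim 𝓔₊ = dim 𝔤 and ⟨·,·⟩ restricted to 𝓔₊ is positive definite; (b) there exists a linear map E₀: 𝔤* → 𝔤 whose symmetric part (ξ,η) ↦ ½(ξ(E₀η) + η(E₀ξ)) is positive definite, such that 𝓔₊ = {E₀(ξ) + j(ξ) : ξ ∈ 𝔤*}. Moreover, in case (b) the map E₀ is uniquely determined by 𝓔₊ and is invertible. -/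
/-!
Write `q v := B v ·|_𝔤`. Since `𝔤` is isotropic and `q ∘ j = id`, the map `ξ ↦ E₀ ξ + j ξ` is a
section of `q`, and its graph satisfies `⟨E₀ ξ + j ξ, E₀ ξ + j ξ⟩ = 2 ξ(E₀ ξ)`; this links the two
positivity conditions and forces `E₀` to be injective. Conversely, a positive definite `𝓔₊` meets
the isotropic subspace `𝔤 = ker q` trivially, so for `dim 𝓔₊ = dim 𝔤*` the restriction `q|_{𝓔₊}`
is an isomorphism onto `𝔤*`, and `E₀ ξ := (q|_{𝓔₊})⁻¹ ξ - j ξ` lies in `ker q = 𝔤`.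
-/

open Module LinearMap

section Graph

variable {K V : Type*} [Field K] [AddCommGroup V] [Module K V]
  {B : LinearMap.BilinForm K V} {g : Submodule K V} {j : Dual K g →ₗ[K] V}

theorem ker_compl₂_subtype_eq_orthogonal (hsymm : B.IsSymm) :
    ker (B.compl₂ g.subtype) = B.orthogonal g := by
  ext v
  simp only [mem_ker, BilinForm.mem_orthogonal_iff, hsymm.eq _ v]
  exact ⟨fun h x hx => DFunLike.congr_fun h ⟨x, hx⟩, fun h => ext fun x => h x x.2⟩

theorem compl₂_subtype_graph_apply (hg : g ≤ B.orthogonal g)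
    (hj : ∀ (ξ : Dual K g) (x : g), B (j ξ) x = ξ x) (E0 : Dual K g →ₗ[K] g) (ξ : Dual K g) :
    B.compl₂ g.subtype ((g.subtype ∘ₗ E0 + j) ξ) = ξ := by
  ext x
  simp [hj, hg x.2 _ (E0 ξ).2]

theorem graph_injective (hg : g ≤ B.orthogonal g)
    (hj : ∀ (ξ : Dual K g) (x : g), B (j ξ) x = ξ x) (E0 : Dual K g →ₗ[K] g) :
    Function.Injective (g.subtype ∘ₗ E0 + j) :=
  Function.LeftInverse.injective (compl₂_subtype_graph_apply hg hj E0)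

theorem eq_of_range_graph_eq (hg : g ≤ B.orthogonal g)
    (hj : ∀ (ξ : Dual K g) (x : g), B (j ξ) x = ξ x) {E0 E0' : Dual K g →ₗ[K] g}
    (h : range (g.subtype ∘ₗ E0 + j) = range (g.subtype ∘ₗ E0' + j)) : E0 = E0' := by
  ext ξ
  obtain ⟨η, hη⟩ : (g.subtype ∘ₗ E0 + j) ξ ∈ range (g.subtype ∘ₗ E0' + j) :=
    h ▸ mem_range_self _ ξ
  obtain rfl : η = ξ := by
    simpa only [compl₂_subtype_graph_apply hg hj] using congrArg (B.compl₂ g.subtype) hη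
  exact (add_right_cancel hη).symm

theorem apply_graph_self (hsymm : B.IsSymm) (hg : g ≤ B.orthogonal g)
    (hj : ∀ (ξ : Dual K g) (x : g), B (j ξ) x = ξ x) (hjiso : ∀ ξ η, B (j ξ) (j η) = 0)
    (E0 : Dual K g →ₗ[K] g) (ξ : Dual K g) :
    B ((g.subtype ∘ₗ E0 + j) ξ) ((g.subtype ∘ₗ E0 + j) ξ) = ξ (E0 ξ) + ξ (E0 ξ) := by
  have hE0 : B (E0 ξ) (E0 ξ) = 0 := hg (E0 ξ).2 _ (E0 ξ).2
  simp [hE0, hsymm.eq (E0 ξ : V), hj, hjiso]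

theorem exists_range_graph_eq [FiniteDimensional K V] (hker : ker (B.compl₂ g.subtype) = g)
    (hj : ∀ (ξ : Dual K g) (x : g), B (j ξ) x = ξ x) {W : Submodule K V}
    (hdim : finrank K W = finrank K g) (hW : Disjoint W g) :
    ∃ E0 : Dual K g →ₗ[K] g, W = range (g.subtype ∘ₗ E0 + j) := by
  set q := B.compl₂ g.subtype
  have hinj : Function.Injective (q.domRestrict W) :=
    injective_domRestrict_iff.mpr (by rwa [hker])
  have hsurj : Function.Surjective (q.domRestrict W) :=
    (injective_iff_surjective_of_finrank_eq_finrank (by simpa using hdim)).mp hinj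
  set e := LinearEquiv.ofBijective _ ⟨hinj, hsurj⟩
  set F := W.subtype ∘ₗ e.symm.toLinearMap - j
  have hF (ξ : Dual K g) : F ξ ∈ g := by
    refine hker.le (mem_ker.mpr ?_)
    have hqj : q (j ξ) = ξ := ext (hj ξ)
    rw [LinearMap.sub_apply, map_sub, hqj, sub_eq_zero]
    exact e.apply_symm_apply ξ
  refine ⟨F.codRestrict g hF, ?_⟩
  have hgraph : g.subtype ∘ₗ F.codRestrict g hF + j = W.subtype ∘ₗ e.symm.toLinearMap := by
    ext ξ; simp [F]
  rw [hgraph, range_comp, LinearEquiv.range, Submodule.map_top, Submodule.range_subtype]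

theorem forall_pos_on_range_graph_iff [LinearOrder K] [IsStrictOrderedRing K] (hsymm : B.IsSymm)
    (hg : g ≤ B.orthogonal g)
    (hj : ∀ (ξ : Dual K g) (x : g), B (j ξ) x = ξ x) (hjiso : ∀ ξ η, B (j ξ) (j η) = 0)
    (E0 : Dual K g →ₗ[K] g) :
    (∀ v ∈ range (g.subtype ∘ₗ E0 + j), v ≠ 0 → 0 < B v v) ↔
      ∀ ξ : Dual K g, ξ ≠ 0 → 0 < ξ (E0 ξ) := by
  simp only [mem_range, forall_exists_index, forall_apply_eq_imp_iff,
    map_ne_zero_iff _ (graph_injective hg hj E0), apply_graph_self hsymm hg hj hjiso]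
  refine forall₂_congr fun ξ _ => ⟨fun h => ?_, fun h => ?_⟩ <;> linarith

theorem disjoint_of_forall_pos [Preorder K] (hg : g ≤ B.orthogonal g) {W : Submodule K V}
    (hW : ∀ v ∈ W, v ≠ 0 → 0 < B v v) : Disjoint W g := by
  refine Submodule.disjoint_def.mpr fun v hvW hvg => ?_
  by_contra hv
  exact (hW v hvW hv).ne' (hg hvg v hvg)

end Graph

theorem bijective_of_apply_self_ne_zero {K W : Type*} [Field K] [AddCommGroup W] [Module K W]
    [FiniteDimensional K W] (f : Dual K W →ₗ[K] W) (hf : ∀ ξ : Dual K W, ξ ≠ 0 → ξ (f ξ) ≠ 0) :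
    Function.Bijective f := by
  have hinj : Function.Injective f := by
    refine (injective_iff_map_eq_zero f).mpr fun ξ hξ => ?_
    by_contra hξ0
    exact hf ξ hξ0 (by simp [hξ])
  exact ⟨hinj, (injective_iff_surjective_of_finrank_eq_finrank Subspace.dual_finrank_eq).mp hinj⟩

theorem stmt2_general (V : Type*) [AddCommGroup V] [Module ℝ V] [FiniteDimensional ℝ V]
    (B : LinearMap.BilinForm ℝ V) (hsymm : B.IsSymm)
    (g : Submodule ℝ V) (hlag : g = B.orthogonal g)
    (j : Module.Dual ℝ g →ₗ[ℝ] V)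
    (hj : ∀ (ξ : Module.Dual ℝ g) (x : g), B (j ξ) x = ξ x)
    (hjiso : ∀ ξ η : Module.Dual ℝ g, B (j ξ) (j η) = 0)
    (Eplus : Submodule ℝ V) :
    ((Module.finrank ℝ Eplus = Module.finrank ℝ g ∧
        ∀ v ∈ Eplus, v ≠ 0 → 0 < B v v) ↔
      (∃ E0 : Module.Dual ℝ g →ₗ[ℝ] g,
        (∀ ξ : Module.Dual ℝ g, ξ ≠ 0 → 0 < (ξ (E0 ξ) + ξ (E0 ξ)) / 2) ∧
        Eplus = LinearMap.range (g.subtype ∘ₗ E0 + j))) ∧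
    (∀ E0 E0' : Module.Dual ℝ g →ₗ[ℝ] g,
      ((∀ ξ : Module.Dual ℝ g, ξ ≠ 0 → 0 < (ξ (E0 ξ) + ξ (E0 ξ)) / 2) ∧
        Eplus = LinearMap.range (g.subtype ∘ₗ E0 + j)) →
      ((∀ ξ : Module.Dual ℝ g, ξ ≠ 0 → 0 < (ξ (E0' ξ) + ξ (E0' ξ)) / 2) ∧
        Eplus = LinearMap.range (g.subtype ∘ₗ E0' + j)) →
      E0 = E0') ∧
    (∀ E0 : Module.Dual ℝ g →ₗ[ℝ] g,
      ((∀ ξ : Module.Dual ℝ g, ξ ≠ 0 → 0 < (ξ (E0 ξ) + ξ (E0 ξ)) / 2) ∧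
        Eplus = LinearMap.range (g.subtype ∘ₗ E0 + j)) →
      Function.Bijective E0) := by
  have hg : g ≤ B.orthogonal g := hlag.le
  have hker : ker (B.compl₂ g.subtype) = g :=
    (ker_compl₂_subtype_eq_orthogonal hsymm).trans hlag.symm
  simp only [add_self_div_two]
  refine ⟨⟨fun ⟨hdim, hpos⟩ => ?_, ?_⟩, ?_, ?_⟩
  · obtain ⟨E0, rfl⟩ := exists_range_graph_eq hker hj hdim (disjoint_of_forall_pos hg hpos)
    exact ⟨E0, (forall_pos_on_range_graph_iff hsymm hg hj hjiso E0).mp hpos, rfl⟩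
  · rintro ⟨E0, hpos, rfl⟩
    refine ⟨?_, (forall_pos_on_range_graph_iff hsymm hg hj hjiso E0).mpr hpos⟩
    rw [finrank_range_of_inj (graph_injective hg hj E0), Subspace.dual_finrank_eq]
  · rintro E0 E0' ⟨-, h⟩ ⟨-, h'⟩
    exact eq_of_range_graph_eq hg hj (h.symm.trans h')
  · rintro E0 ⟨hpos, -⟩
    exact bijective_of_apply_self_ne_zero E0 fun ξ hξ => (hpos ξ hξ).ne'

/-- **Generalized metrics as graphs.**
Given a Lagrangian subspace `g` of `(V, B)` and an isotropic splitting `j`,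
a subspace `E₊ ⊆ V` is a generalized metric (of dimension `dim g` with `B`
positive definite on it) iff it is the graph `{E₀ ξ + j ξ : ξ ∈ g*}` of a
linear map `E₀ : g* → g` whose symmetric part `(ξ,η) ↦ (ξ(E₀η)+η(E₀ξ))/2`
is positive definite; moreover such `E₀` is unique and invertible. -/
theorem stmt2 (V : Type*) [AddCommGroup V] [Module ℝ V] [FiniteDimensional ℝ V]
    (B : LinearMap.BilinForm ℝ V) (hnd : B.Nondegenerate) (hsymm : B.IsSymm)
    (g : Submodule ℝ V) (hlag : g = B.orthogonal g)
    (j : Module.Dual ℝ g →ₗ[ℝ] V)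
    (hj : ∀ (ξ : Module.Dual ℝ g) (x : g), B (j ξ) x = ξ x)
    (hjiso : ∀ ξ η : Module.Dual ℝ g, B (j ξ) (j η) = 0)
    (Eplus : Submodule ℝ V) :
    ((Module.finrank ℝ Eplus = Module.finrank ℝ g ∧
        ∀ v ∈ Eplus, v ≠ 0 → 0 < B v v) ↔
      (∃ E0 : Module.Dual ℝ g →ₗ[ℝ] g,
        (∀ ξ : Module.Dual ℝ g, ξ ≠ 0 → 0 < (ξ (E0 ξ) + ξ (E0 ξ)) / 2) ∧
        Eplus = LinearMap.range (g.subtype ∘ₗ E0 + j))) ∧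
    (∀ E0 E0' : Module.Dual ℝ g →ₗ[ℝ] g,
      ((∀ ξ : Module.Dual ℝ g, ξ ≠ 0 → 0 < (ξ (E0 ξ) + ξ (E0 ξ)) / 2) ∧
        Eplus = LinearMap.range (g.subtype ∘ₗ E0 + j)) →
      ((∀ ξ : Module.Dual ℝ g, ξ ≠ 0 → 0 < (ξ (E0' ξ) + ξ (E0' ξ)) / 2) ∧
        Eplus = LinearMap.range (g.subtype ∘ₗ E0' + j)) →
      E0 = E0') ∧
    (∀ E0 : Module.Dual ℝ g →ₗ[ℝ] g,
      ((∀ ξ : Module.Dual ℝ g, ξ ≠ 0 → 0 < (ξ (E0 ξ) + ξ (E0 ξ)) / 2) ∧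
        Eplus = LinearMap.range (g.subtype ∘ₗ E0 + j)) →
      Function.Bijective E0) :=
  stmt2_general V B hsymm g hlag j hj hjiso Eplus
end

section
/- Let A be a real n×n matrix whose symmetric part ½(A + Aᵀ) is positive definite, and let P be a real skew-symmetric n×n matrix (Pᵀ = −P). Then det(I − A·P) > 0. (This is the key positivity fact making the dilaton formula φ = −½ ln det(1 − E₀Π) − ½ ln ν well defined.) -/
/-!
Along the path `t ↦ det (1 - A * (t • P))` the determinant never vanishes: if
`v = A (t P) v` with `v ≠ 0`, then `y = t P v` is nonzero and
`yᵀ A y = yᵀ v = vᵀ (t P) v = 0` by skew-symmetry, contradicting positivity of the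
symmetric part. Since the path starts at `det 1 = 1`, it stays positive up to `t = 1`.
-/

open Matrix

lemma pos_of_continuous_of_ne_zero {X : Type*} [TopologicalSpace X] [PreconnectedSpace X]
    {f : X → ℝ} (hf : Continuous f) (hne : ∀ x, f x ≠ 0) {x₀ : X} (h₀ : 0 < f x₀) (x : X) :
    0 < f x := by
  by_contra! h
  obtain ⟨y, hy⟩ := intermediate_value_univ x x₀ hf ⟨h, h₀.le⟩
  exact hne y hy

namespace Matrix

variable {ι : Type*} [Fintype ι]

lemma dotProduct_mulVec_self_eq_zero_of_transpose_eq_neg {Q : Matrix ι ι ℝ} (hQ : Qᵀ = -Q)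
    (v : ι → ℝ) : v ⬝ᵥ (Q *ᵥ v) = 0 := by
  have h : v ⬝ᵥ (Q *ᵥ v) = -(v ⬝ᵥ (Q *ᵥ v)) := by
    conv_lhs => rw [dotProduct_mulVec, ← mulVec_transpose, hQ, neg_mulVec, neg_dotProduct,
      dotProduct_comm]
  linarith

lemma dotProduct_mulVec_half_smul_add_transpose (A : Matrix ι ι ℝ) (y : ι → ℝ) :
    y ⬝ᵥ ((((1 : ℝ) / 2) • (A + Aᵀ)) *ᵥ y) = y ⬝ᵥ (A *ᵥ y) := by
  have hT : y ⬝ᵥ (Aᵀ *ᵥ y) = y ⬝ᵥ (A *ᵥ y) := by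
    rw [dotProduct_mulVec, ← mulVec_transpose, transpose_transpose, dotProduct_comm]
  rw [smul_mulVec, add_mulVec, dotProduct_smul, dotProduct_add, hT, smul_eq_mul]
  ring

variable [DecidableEq ι]

lemma det_one_sub_mul_ne_zero_of_posDef {A Q : Matrix ι ι ℝ}
    (hA : (((1 : ℝ) / 2) • (A + Aᵀ)).PosDef) (hQ : Qᵀ = -Q) : (1 - A * Q).det ≠ 0 := by
  intro hdet
  obtain ⟨v, hv, hfix⟩ := exists_mulVec_eq_zero_iff.2 hdet
  rw [sub_mulVec, one_mulVec, sub_eq_zero, ← mulVec_mulVec] at hfix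
  set y := Q *ᵥ v
  have hy : y ≠ 0 := fun h ↦ hv (by rw [hfix, h, mulVec_zero])
  have hpos := hA.dotProduct_mulVec_pos hy
  rw [star_trivial, dotProduct_mulVec_half_smul_add_transpose, ← hfix, dotProduct_comm,
    dotProduct_mulVec_self_eq_zero_of_transpose_eq_neg hQ] at hpos
  exact hpos.false

lemma det_one_sub_mul_pos_of_posDef {A P : Matrix ι ι ℝ}
    (hA : (((1 : ℝ) / 2) • (A + Aᵀ)).PosDef) (hP : Pᵀ = -P) : 0 < (1 - A * P).det := by
  let f : ℝ → ℝ := fun t ↦ (1 - A * (t • P)).det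
  have hf : Continuous f := by fun_prop
  have hne : ∀ t, f t ≠ 0 := fun t ↦
    det_one_sub_mul_ne_zero_of_posDef hA (by rw [transpose_smul, hP, smul_neg])
  have h₀ : 0 < f 0 := by simp [f]
  simpa [f] using pos_of_continuous_of_ne_zero hf hne h₀ 1

end Matrix

/-- If the symmetric part of a real matrix `A` is positive definite and `P` is
skew-symmetric, then `det (I − A·P) > 0`.  (This is the key positivity fact
making the dilaton formula `φ = −½ ln det(1 − E₀Π) − ½ ln ν` well defined.) -/
theorem stmt6 (n : ℕ) (A P : Matrix (Fin n) (Fin n) ℝ)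
    (hA : (((1 : ℝ) / 2) • (A + Aᵀ)).PosDef) (hP : Pᵀ = -P) :
    0 < (1 - A * P).det :=
  det_one_sub_mul_pos_of_posDef hA hP
end

section
/- Let S be a real symmetric positive definite n×n matrix and T a real skew-symmetric n×n matrix (Tᵀ = −T). Then S − T·S⁻¹·T is symmetric positive definite and det(S + T)² = det(S) · det(S − T·S⁻¹·T); equivalently det(S+T) = det(S)^{1/2} · det(S − T S⁻¹ T)^{1/2}. -/
/-!
The factorisation `(S + T) S⁻¹ (S - T) = S - T S⁻¹ T` together with
`det (S - T) = det (S + T)ᵀ = det (S + T)` gives the determinant identity, and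
`S - T S⁻¹ T = S + Tᵀ S⁻¹ T` is positive definite plus positive semidefinite. To take the square
root one needs the sign of `det (S + T)`: since `T` is skew, `S + T` has the positive quadratic
form of `S`, and every `(1 - t) • 1 + t • (S + T)`, `t ∈ [0, 1]`, then has a positive form, hence
is invertible, so the determinant cannot change sign along this path from `1` to `S + T`.
-/

open Matrix

namespace Matrix

variable {n : Type*} [Fintype n]

theorem dotProduct_mulVec_self_eq_zero_of_transpose_eq_neg_s7 {R : Type*} [CommRing R]
    [NoZeroDivisors R] [CharZero R] {T : Matrix n n R} (hT : Tᵀ = -T) (x : n → R) :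
    x ⬝ᵥ T *ᵥ x = 0 := by
  have h : x ⬝ᵥ T *ᵥ x = -(x ⬝ᵥ T *ᵥ x) := by
    conv_lhs => rw [dotProduct_mulVec, ← transpose_transpose T, vecMul_transpose, hT,
      neg_mulVec, dotProduct_comm, dotProduct_neg]
  exact self_eq_neg.mp h

theorem det_pos_of_dotProduct_mulVec_pos [DecidableEq n] {A : Matrix n n ℝ}
    (hA : ∀ x ≠ 0, 0 < x ⬝ᵥ A *ᵥ x) : 0 < A.det := by
  set f : ℝ → ℝ := fun t => ((1 - t) • (1 : Matrix n n ℝ) + t • A).det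
  have hf : Continuous f := by unfold f; fun_prop
  have hf_ne : ∀ t ∈ Set.Icc (0 : ℝ) 1, f t ≠ 0 := by
    rintro t ⟨ht0, ht1⟩ hdet
    obtain ⟨x, hx, hx0⟩ := exists_mulVec_eq_zero_iff.2 hdet
    have hpos : 0 < x ⬝ᵥ ((1 - t) • (1 : Matrix n n ℝ) + t • A) *ᵥ x := by
      rw [add_mulVec, smul_mulVec, smul_mulVec, one_mulVec, dotProduct_add,
        dotProduct_smul, dotProduct_smul, smul_eq_mul, smul_eq_mul]
      have hxx : 0 < x ⬝ᵥ x := by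
        simpa using (PosDef.one (n := n) (R := ℝ)).dotProduct_mulVec_pos hx
      have hxA := hA x hx
      rcases ht1.eq_or_lt with rfl | ht1
      · simpa using hxA
      · nlinarith
    simp [hx0] at hpos
  by_contra! hle
  have h1 : f 1 ≤ 0 := by simpa [f] using hle
  have h0 : 0 ≤ f 0 := by simp [f]
  obtain ⟨t, ht, ht0⟩ := intermediate_value_Icc' zero_le_one hf.continuousOn ⟨h1, h0⟩
  exact hf_ne t ht ht0

theorem PosDef.det_add_pos_of_transpose_eq_neg [DecidableEq n] {S T : Matrix n n ℝ}
    (hS : S.PosDef) (hT : Tᵀ = -T) : 0 < (S + T).det := by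
  refine det_pos_of_dotProduct_mulVec_pos fun x hx => ?_
  rw [add_mulVec, dotProduct_add, dotProduct_mulVec_self_eq_zero_of_transpose_eq_neg_s7 hT,
    add_zero]
  simpa using hS.dotProduct_mulVec_pos hx

variable [DecidableEq n]

theorem add_mul_inv_mul_sub {R : Type*} [CommRing R] {S : Matrix n n R} (hS : IsUnit S.det)
    (T : Matrix n n R) : (S + T) * S⁻¹ * (S - T) = S - T * S⁻¹ * T := by
  calc (S + T) * S⁻¹ * (S - T)
      = S * S⁻¹ * S - S * S⁻¹ * T + T * (S⁻¹ * S) - T * S⁻¹ * T := by noncomm_ring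
    _ = S - T * S⁻¹ * T := by
      rw [mul_nonsing_inv S hS, nonsing_inv_mul S hS]; noncomm_ring

theorem det_add_sq_eq_det_mul_det_sub_mul_inv_mul {K : Type*} [Field K] {S T : Matrix n n K}
    (hS : S.IsSymm) (hT : Tᵀ = -T) (hdet : S.det ≠ 0) :
    (S + T).det ^ 2 = S.det * (S - T * S⁻¹ * T).det := by
  have hsub : (S - T).det = (S + T).det := by
    rw [← det_transpose, transpose_sub, hT, hS.eq, sub_neg_eq_add]
  rw [← add_mul_inv_mul_sub hdet.isUnit, det_mul, det_mul, det_nonsing_inv,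
    Ring.inverse_eq_inv', hsub]
  field_simp

open scoped ComplexOrder in
theorem PosDef.sub_mul_inv_mul_of_conjTranspose_eq_neg {𝕜 : Type*} [RCLike 𝕜]
    {S T : Matrix n n 𝕜} (hS : S.PosDef) (hT : Tᴴ = -T) : (S - T * S⁻¹ * T).PosDef := by
  have h : S - T * S⁻¹ * T = S + Tᴴ * S⁻¹ * T := by
    rw [hT]; noncomm_ring
  rw [h]
  exact hS.add_posSemidef (hS.inv.posSemidef.conjTranspose_mul_mul_same T)

end Matrix

/-- For `S` real symmetric positive definite and `T` skew-symmetric,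
`S − T·S⁻¹·T` is symmetric positive definite and
`det(S+T)² = det S · det (S − T S⁻¹ T)`; equivalently
`det(S+T) = det(S)^{1/2} · det(S − T S⁻¹ T)^{1/2}`. -/
theorem stmt7 (n : ℕ) (S T : Matrix (Fin n) (Fin n) ℝ)
    (hS : S.PosDef) (hT : Tᵀ = -T) :
    (S - T * S⁻¹ * T).PosDef ∧
    (S + T).det ^ 2 = S.det * (S - T * S⁻¹ * T).det ∧
    (S + T).det = Real.sqrt S.det * Real.sqrt (S - T * S⁻¹ * T).det := by
  have hSymm : S.IsSymm := isHermitian_iff_isSymm.mp hS.isHermitian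
  have hdet_sq := det_add_sq_eq_det_mul_det_sub_mul_inv_mul hSymm hT hS.det_pos.ne'
  refine ⟨hS.sub_mul_inv_mul_of_conjTranspose_eq_neg
    (by rwa [conjTranspose_eq_transpose_of_trivial]), hdet_sq, ?_⟩
  rw [← Real.sqrt_mul hS.det_pos.le, ← hdet_sq,
    Real.sqrt_sq (hS.det_add_pos_of_transpose_eq_neg hT).le]
end

section
/- Let S be a real symmetric invertible n×n matrix and T a real skew-symmetric n×n matrix such that S − T·S⁻¹·T is invertible. Then S + T is invertible and (S + T)⁻¹ = (S − T S⁻¹ T)⁻¹ − S⁻¹ T (S − T S⁻¹ T)⁻¹; moreover (S − T S⁻¹ T)⁻¹ is symmetric and S⁻¹ T (S − T S⁻¹ T)⁻¹ is skew-symmetric, so these are respectively the symmetric and skew-symmetric parts of (S + T)⁻¹. -/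
/-!
With `M = S - T S⁻¹ T` one has `(S + T)(1 - S⁻¹ T) = M`, so `(1 - S⁻¹ T) M⁻¹` is a right inverse
of `S + T`. Transposition fixes `S`, `S⁻¹` and `T S⁻¹ T`, hence `M` and `M⁻¹` are symmetric.
Finally `T S⁻¹ M = M S⁻¹ T` gives `M⁻¹ T S⁻¹ = S⁻¹ T M⁻¹`, and the left side is minus the
transpose of the right side.
-/

open Matrix

theorem add_mul_one_sub_mul_eq {α : Type*} [Ring α] {s s' : α} (t : α) (h : s * s' = 1) :
    (s + t) * (1 - s' * t) = s - t * s' * t := by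
  rw [mul_sub, mul_one, add_mul, ← mul_assoc s, h, one_mul, mul_assoc]
  abel

theorem mul_mul_sub_mul_mul_eq {α : Type*} [Ring α] {s s' : α} (t : α)
    (h₁ : s' * s = 1) (h₂ : s * s' = 1) :
    t * s' * (s - t * s' * t) = (s - t * s' * t) * (s' * t) := by
  have hl : t * s' * s = t := by rw [mul_assoc, h₁, mul_one]
  have hr : s * (s' * t) = t := by rw [← mul_assoc, h₂, one_mul]
  rw [mul_sub, sub_mul, hl, hr]
  simp only [mul_assoc]

namespace Matrix

variable {n R : Type*} [Fintype n] [DecidableEq n] [CommRing R]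

theorem nonsing_inv_mul_eq_mul_nonsing_inv {A B M : Matrix n n R} (hM : IsUnit M.det)
    (h : A * M = M * B) : M⁻¹ * A = B * M⁻¹ :=
  calc M⁻¹ * A = M⁻¹ * (A * M) * M⁻¹ := by
        rw [← mul_assoc, mul_nonsing_inv_cancel_right _ _ hM]
    _ = B * M⁻¹ := by rw [h, nonsing_inv_mul_cancel_left _ _ hM]

section SchurComplement

variable {S T : Matrix n n R}

theorem add_mul_inv_sub_mul_inv_mul_eq_one (hS : IsUnit S.det) (hM : IsUnit (S - T * S⁻¹ * T).det) :
    (S + T) * ((S - T * S⁻¹ * T)⁻¹ - S⁻¹ * T * (S - T * S⁻¹ * T)⁻¹) = 1 := by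
  rw [← one_sub_mul, ← mul_assoc, add_mul_one_sub_mul_eq T (mul_nonsing_inv S hS),
    mul_nonsing_inv _ hM]

theorem IsSymm.sub_mul_inv_mul (hS : S.IsSymm) (hT : Tᵀ = -T) :
    (S - T * S⁻¹ * T).IsSymm :=
  hS.sub <| by
    rw [IsSymm, transpose_mul, transpose_mul, hT, hS.inv.eq, neg_mul, mul_neg, mul_neg,
      neg_neg, mul_assoc]

theorem transpose_inv_mul_mul_inv_sub (hS : S.IsSymm) (hT : Tᵀ = -T) (hSu : IsUnit S.det)
    (hM : IsUnit (S - T * S⁻¹ * T).det) :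
    (S⁻¹ * T * (S - T * S⁻¹ * T)⁻¹)ᵀ = -(S⁻¹ * T * (S - T * S⁻¹ * T)⁻¹) := by
  have hswap : (S - T * S⁻¹ * T)⁻¹ * (T * S⁻¹) = S⁻¹ * T * (S - T * S⁻¹ * T)⁻¹ :=
    nonsing_inv_mul_eq_mul_nonsing_inv hM <|
      mul_mul_sub_mul_mul_eq T (nonsing_inv_mul S hSu) (mul_nonsing_inv S hSu)
  rw [transpose_mul, transpose_mul, (hS.sub_mul_inv_mul hT).inv.eq, hT, hS.inv.eq, ← hswap,
    neg_mul, mul_neg, mul_assoc]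

end SchurComplement

end Matrix

/-- For `S` real symmetric invertible and `T` skew-symmetric with
`S − T S⁻¹ T` invertible, `S + T` is invertible with
`(S+T)⁻¹ = (S − T S⁻¹ T)⁻¹ − S⁻¹ T (S − T S⁻¹ T)⁻¹`; moreover
`(S − T S⁻¹ T)⁻¹` is symmetric and `S⁻¹ T (S − T S⁻¹ T)⁻¹` is skew-symmetric,
so these are the symmetric and skew-symmetric parts of `(S+T)⁻¹`. -/
theorem stmt8 (n : ℕ) (S T : Matrix (Fin n) (Fin n) ℝ)
    (hSsymm : Sᵀ = S) (hSunit : IsUnit S.det) (hT : Tᵀ = -T)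
    (hinv : IsUnit (S - T * S⁻¹ * T).det) :
    IsUnit (S + T).det ∧
    (S + T)⁻¹ = (S - T * S⁻¹ * T)⁻¹ - S⁻¹ * T * (S - T * S⁻¹ * T)⁻¹ ∧
    ((S - T * S⁻¹ * T)⁻¹)ᵀ = (S - T * S⁻¹ * T)⁻¹ ∧
    (S⁻¹ * T * (S - T * S⁻¹ * T)⁻¹)ᵀ = -(S⁻¹ * T * (S - T * S⁻¹ * T)⁻¹) := by
  have hright := add_mul_inv_sub_mul_inv_mul_eq_one hSunit hinv
  exact ⟨isUnit_det_of_right_inverse hright, inv_eq_right_inv hright,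
    (IsSymm.sub_mul_inv_mul hSsymm hT).inv.eq,
    transpose_inv_mul_mul_inv_sub hSsymm hT hSunit hinv⟩
end

section
/- Let (𝔡, ⟨·,·⟩) be a quadratic Lie algebra and 𝔤 ⊆ 𝔡 a Lagrangian Lie subalgebra (𝔤 = 𝔤^⊥) which is unimodular, i.e. Tr(ad_x: 𝔤 → 𝔤) = 0 for every x ∈ 𝔤. Let χ(x,y,z) = ⟨[x,y], z⟩ be the Cartan 3-form. Then for any basis (t_μ) of 𝔡 with ⟨·,·⟩-dual basis (t^μ) (determined by ⟨t^μ, t_ν⟩ = δ^μ_ν), the full contraction ∑_{λ,μ,ν} χ(t_λ, t_μ, t_ν) · χ(t^λ, t^μ, t^ν) equals 0. -/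
/-!
Contracting the third index turns `⟨χ, χ⟩` into `-∑ₗ κ(cₗ, bₗ)`, the `B`-trace of the Killing
form `κ` of `𝔡` up to sign, which does not depend on the dual pair `(b, c)`. Evaluate it on a pair
adapted to `𝔤`: a basis `e` of `𝔤` together with vectors `f` spanning an isotropic complement,
`B(eᵢ, fⱼ) = δᵢⱼ`. Expanding `κ(eᵢ, fᵢ) = tr(ad eᵢ ∘ ad fᵢ)` in that pair and using that `𝔤` is a
subalgebra, every term becomes a multiple of `B(v, v)` with `v = ∑ₖ [eₖ, fₖ]`. Finally
`B(x, v) = tr(ad x : 𝔤 → 𝔤)` for `x ∈ 𝔤`, so unimodularity puts `v` in `𝔤^⊥ = 𝔤`, which is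
isotropic.
-/

open LinearMap (BilinForm)
open Module

theorem LinearMap.trace_eq_sum_of_sum_smul_eq {R M κ : Type*} [CommRing R] [AddCommGroup M]
    [Module R M] [Free R M] [Module.Finite R M] [Fintype κ] (φ : κ → Dual R M) (t : κ → M)
    (h : ∀ x, ∑ m, φ m x • t m = x) (T : M →ₗ[R] M) :
    trace R M T = ∑ m, φ m (T (t m)) := by
  have hT : T = ∑ m, (φ m).smulRight (T (t m)) := by
    ext x
    conv_lhs => rw [← h x]
    simp
  conv_lhs => rw [hT]
  simp

namespace LinearMap.BilinForm

variable {R M : Type*} [CommRing R] [AddCommGroup M] [Module R M]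
variable {ι κ : Type*} [Fintype ι] [Fintype κ]

def IsDualPair (B : BilinForm R M) (t s : κ → M) : Prop :=
  ∀ x, ∑ m, B (s m) x • t m = x

theorem isDualPair_of_basis [DecidableEq κ] {B : BilinForm R M} (b : Basis κ R M) {c : κ → M}
    (hdual : ∀ μ ν, B (c μ) (b ν) = if μ = ν then 1 else 0) : B.IsDualPair b c := by
  have hcoord : ∀ x l, B (c l) x = b.repr x l := by
    intro x l
    conv_lhs => rw [← b.sum_repr x]
    simp [-Basis.sum_repr, hdual]
  intro x
  simp only [hcoord, b.sum_repr]

namespace IsDualPair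

variable {B : BilinForm R M} {t s : κ → M}

theorem trace_eq [Free R M] [Module.Finite R M] (h : B.IsDualPair t s) (T : M →ₗ[R] M) :
    trace R M T = ∑ m, B (s m) (T (t m)) :=
  trace_eq_sum_of_sum_smul_eq (fun m => B (s m)) t h T

theorem sum_apply_mul_apply (hB : B.IsSymm) (h : B.IsDualPair t s) (x y : M) :
    ∑ m, B x (t m) * B y (s m) = B x y := by
  conv_rhs => rw [← h y]
  simp [map_sum, hB.eq y, mul_comm]

theorem sum_apply_eq_sum_apply (hB : B.IsSymm) (h : B.IsDualPair t s) {b c : ι → M}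
    (h' : B.IsDualPair b c) (F : M →ₗ[R] M →ₗ[R] R) :
    ∑ l, F (c l) (b l) = ∑ m, F (t m) (s m) := by
  calc ∑ l, F (c l) (b l) = ∑ l, ∑ m, B (s m) (c l) * F (t m) (b l) := by
        refine Finset.sum_congr rfl fun l _ => ?_
        conv_lhs => rw [← h (c l)]
        simp
    _ = ∑ m, F (t m) (∑ l, B (c l) (s m) • b l) := by
        rw [Finset.sum_comm]
        simp [hB.eq (c _)]
    _ = ∑ m, F (t m) (s m) := Finset.sum_congr rfl fun m _ => by rw [h' (s m)]

end IsDualPair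

section Lie

variable {R D : Type*} [CommRing R] [LieRing D] [LieAlgebra R D] {B : BilinForm R D}

theorem sum_cartan_mul_cartan_eq_neg_killingForm [Free R D] [Module.Finite R D]
    (hB : B.IsSymm) (hinv : ∀ x y z : D, B ⁅x, y⁆ z = B x ⁅y, z⁆) {b c : ι → D}
    (h : B.IsDualPair b c) :
    ∑ l, ∑ m, ∑ n, B ⁅b l, b m⁆ (b n) * B ⁅c l, c m⁆ (c n) =
      -∑ l, killingForm R D (c l) (b l) := by
  rw [← Finset.sum_neg_distrib]
  refine Finset.sum_congr rfl fun l _ => ?_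
  rw [killingForm_apply_apply, h.trace_eq, ← Finset.sum_neg_distrib]
  refine Finset.sum_congr rfl fun m _ => ?_
  rw [h.sum_apply_mul_apply hB, ← hinv, hB.eq, ← lie_skew, map_neg]
  simp

structure IsLagrangianFrame (B : BilinForm R D) (g : LieSubalgebra R D) (e f : κ → D) :
    Prop where
  mem : ∀ i, e i ∈ g
  isotropic : ∀ x ∈ g, ∀ y ∈ g, B x y = 0
  isDualPair : B.IsDualPair (Sum.elim e f) (Sum.elim f e)

namespace IsLagrangianFrame

variable {g : LieSubalgebra R D} {e f : κ → D}

theorem sum_smul_eq_sub (hF : IsLagrangianFrame B g e f) (z : D) :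
    ∑ j, B (f j) z • e j = z - ∑ j, B (e j) z • f j := by
  have := hF.isDualPair z
  rw [Fintype.sum_sum_type] at this
  exact eq_sub_of_add_eq this

theorem sum_smul_of_mem (hF : IsLagrangianFrame B g e f) {z : D} (hz : z ∈ g) :
    ∑ j, B (f j) z • e j = z := by
  simp [hF.sum_smul_eq_sub, hF.isotropic _ (hF.mem _) _ hz]

theorem apply_sum_lie_eq_trace [Free R g] [Module.Finite R g]
    (hF : IsLagrangianFrame B g e f) (hB : B.IsSymm)
    (hinv : ∀ x y z : D, B ⁅x, y⁆ z = B x ⁅y, z⁆) (x : g) :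
    B x (∑ k, ⁅e k, f k⁆) = trace R g (LieAlgebra.ad R g x) := by
  have hres : ∀ z : g, ∑ j, B (f j) z • (⟨e j, hF.mem j⟩ : g) = z := fun z =>
    Subtype.ext (by simpa using hF.sum_smul_of_mem z.2)
  rw [trace_eq_sum_of_sum_smul_eq (fun j => (B (f j)).comp (g.incl : g →ₗ[R] D)) _ hres,
    map_sum]
  refine Finset.sum_congr rfl fun j _ => ?_
  rw [← hinv, hB.eq]
  rfl

theorem sum_smul_lie_eq_lie (hF : IsLagrangianFrame B g e f) (hB : B.IsSymm)
    (hinv : ∀ x y z : D, B ⁅x, y⁆ z = B x ⁅y, z⁆) {x : D} (hx : x ∈ g) :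
    ∑ i, ∑ j, B x ⁅f i, f j⁆ • ⁅e i, e j⁆ = ⁅x, ∑ k, ⁅e k, f k⁆⁆ := by
  have hrow : ∀ i, ∑ j, B x ⁅f i, f j⁆ • ⁅e i, e j⁆ =
      ⁅e i, ⁅x, f i⁆⁆ - ∑ j, B (e j) ⁅x, f i⁆ • ⁅e i, f j⁆ := by
    intro i
    have h := congrArg (fun y => ⁅e i, y⁆) (hF.sum_smul_eq_sub ⁅x, f i⁆)
    simp only [lie_sum, lie_sub, lie_smul] at h
    rw [← h]
    refine Finset.sum_congr rfl fun j _ => ?_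
    rw [← hinv, hB.eq]
  have hcol : ∀ j, ∑ i, B (e j) ⁅x, f i⁆ • ⁅e i, f j⁆ = -⁅⁅x, e j⁆, f j⁆ := by
    intro j
    rw [← hF.sum_smul_of_mem (g.lie_mem hx (hF.mem j)), sum_lie, ← Finset.sum_neg_distrib]
    refine Finset.sum_congr rfl fun i _ => ?_
    rw [smul_lie, ← neg_smul, ← hinv, ← lie_skew, map_neg, LinearMap.neg_apply, hB.eq (f i)]
  calc ∑ i, ∑ j, B x ⁅f i, f j⁆ • ⁅e i, e j⁆
      = ∑ i, ⁅e i, ⁅x, f i⁆⁆ - ∑ j, ∑ i, B (e j) ⁅x, f i⁆ • ⁅e i, f j⁆ := by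
        rw [Finset.sum_comm (f := fun j i => B (e j) ⁅x, f i⁆ • ⁅e i, f j⁆),
          ← Finset.sum_sub_distrib]
        exact Finset.sum_congr rfl fun i _ => hrow i
    _ = ∑ k, (⁅⁅x, e k⁆, f k⁆ + ⁅e k, ⁅x, f k⁆⁆) := by
        simp only [hcol, Finset.sum_neg_distrib, sub_neg_eq_add, Finset.sum_add_distrib]
        exact add_comm _ _
    _ = ⁅x, ∑ k, ⁅e k, f k⁆⁆ := by
        rw [lie_sum]
        exact Finset.sum_congr rfl fun k _ => (leibniz_lie _ _ _).symm

theorem sum_lie_apply_lie_eq_neg (hF : IsLagrangianFrame B g e f) (hB : B.IsSymm)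
    (hinv : ∀ x y z : D, B ⁅x, y⁆ z = B x ⁅y, z⁆) :
    ∑ i, ∑ j, B ⁅e i, e j⁆ ⁅f i, f j⁆ = -B (∑ k, ⁅e k, f k⁆) (∑ k, ⁅e k, f k⁆) := by
  have hexpand : ∀ i j, B ⁅e i, e j⁆ ⁅f i, f j⁆ =
      ∑ k, B (e k) ⁅f i, f j⁆ * B (f k) ⁅e i, e j⁆ := by
    intro i j
    conv_lhs => rw [← hF.sum_smul_of_mem (g.lie_mem (hF.mem i) (hF.mem j))]
    simp only [map_sum, LinearMap.sum_apply, map_smul, LinearMap.smul_apply, smul_eq_mul]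
    exact Finset.sum_congr rfl fun k _ => mul_comm _ _
  calc ∑ i, ∑ j, B ⁅e i, e j⁆ ⁅f i, f j⁆
      = ∑ k, B (f k) (∑ i, ∑ j, B (e k) ⁅f i, f j⁆ • ⁅e i, e j⁆) := by
        simp only [hexpand, map_sum, map_smul, smul_eq_mul]
        conv_rhs => rw [Finset.sum_comm]
        exact Finset.sum_congr rfl fun i _ => Finset.sum_comm
    _ = ∑ k, B (f k) ⁅e k, ∑ k, ⁅e k, f k⁆⁆ := by
        simp only [hF.sum_smul_lie_eq_lie hB hinv (hF.mem _)]
    _ = ∑ k, -B ⁅e k, f k⁆ (∑ k, ⁅e k, f k⁆) := by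
        refine Finset.sum_congr rfl fun k _ => ?_
        rw [← hinv, ← lie_skew (f k) (e k), map_neg, LinearMap.neg_apply]
    _ = -B (∑ k, ⁅e k, f k⁆) (∑ k, ⁅e k, f k⁆) := by
        rw [Finset.sum_neg_distrib, ← LinearMap.sum_apply, ← map_sum]

theorem sum_lie_apply_lie_swap_eq (hF : IsLagrangianFrame B g e f) (hB : B.IsSymm)
    (hinv : ∀ x y z : D, B ⁅x, y⁆ z = B x ⁅y, z⁆) :
    ∑ i, ∑ j, B ⁅e i, f j⁆ ⁅f i, e j⁆ = -2 * B (∑ k, ⁅e k, f k⁆) (∑ k, ⁅e k, f k⁆) := by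
  have hterm : ∀ i j, B ⁅e i, f j⁆ ⁅f i, e j⁆ =
      B ⁅e i, e j⁆ ⁅f i, f j⁆ + B (e i) ⁅f i, ⁅f j, e j⁆⁆ := by
    intro i j
    rw [hinv, leibniz_lie, map_add, ← lie_skew (f j) (f i), neg_lie, lie_skew, ← hinv]
  have hcorr : ∑ i, ∑ j, B (e i) ⁅f i, ⁅f j, e j⁆⁆ =
      -B (∑ k, ⁅e k, f k⁆) (∑ k, ⁅e k, f k⁆) := by
    have hsum : ∑ j, ⁅f j, e j⁆ = -∑ k, ⁅e k, f k⁆ := by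
      rw [← Finset.sum_neg_distrib]
      exact Finset.sum_congr rfl fun j _ => (lie_skew (f j) (e j)).symm
    calc ∑ i, ∑ j, B (e i) ⁅f i, ⁅f j, e j⁆⁆
        = ∑ i, B (e i) ⁅f i, ∑ j, ⁅f j, e j⁆⁆ := by
          simp only [lie_sum, map_sum]
      _ = ∑ i, -B ⁅e i, f i⁆ (∑ k, ⁅e k, f k⁆) := by
          refine Finset.sum_congr rfl fun i _ => ?_
          rw [hsum, lie_neg, map_neg, ← hinv]
      _ = -B (∑ k, ⁅e k, f k⁆) (∑ k, ⁅e k, f k⁆) := by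
          rw [Finset.sum_neg_distrib, ← LinearMap.sum_apply, ← map_sum]
  simp only [hterm, Finset.sum_add_distrib, hF.sum_lie_apply_lie_eq_neg hB hinv, hcorr]
  ring

theorem sum_killingForm_eq [Free R D] [Module.Finite R D]
    (hF : IsLagrangianFrame B g e f) (hB : B.IsSymm) (hinv : ∀ x y z : D, B ⁅x, y⁆ z = B x ⁅y, z⁆) :
    ∑ i, killingForm R D (e i) (f i) = 3 * B (∑ k, ⁅e k, f k⁆) (∑ k, ⁅e k, f k⁆) := by
  have hterm : ∀ i, killingForm R D (e i) (f i) =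
      -(∑ j, B ⁅e i, f j⁆ ⁅f i, e j⁆ + ∑ j, B ⁅e i, e j⁆ ⁅f i, f j⁆) := by
    intro i
    rw [killingForm_apply_apply, hF.isDualPair.trace_eq, Fintype.sum_sum_type, neg_add,
      ← Finset.sum_neg_distrib, ← Finset.sum_neg_distrib]
    congr 1 <;> refine Finset.sum_congr rfl fun j _ => ?_
    · simp only [Sum.elim_inl, LinearMap.comp_apply, LieAlgebra.ad_apply]
      rw [← hinv, ← lie_skew (f j) (e i), map_neg, LinearMap.neg_apply]
    · simp only [Sum.elim_inr, LinearMap.comp_apply, LieAlgebra.ad_apply]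
      rw [← hinv, ← lie_skew (e j) (e i), map_neg, LinearMap.neg_apply]
  simp only [hterm, Finset.sum_neg_distrib, Finset.sum_add_distrib,
    hF.sum_lie_apply_lie_swap_eq hB hinv, hF.sum_lie_apply_lie_eq_neg hB hinv]
  ring

theorem sum_killingForm_sumElim [Free R D] [Module.Finite R D]
    (hF : IsLagrangianFrame B g e f) (hB : B.IsSymm) (hinv : ∀ x y z : D, B ⁅x, y⁆ z = B x ⁅y, z⁆) :
    ∑ m, killingForm R D (Sum.elim e f m) (Sum.elim f e m) =
      6 * B (∑ k, ⁅e k, f k⁆) (∑ k, ⁅e k, f k⁆) := by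
  simp only [Fintype.sum_sum_type, Sum.elim_inl, Sum.elim_inr]
  simp only [LieModule.traceForm_comm R D D (f _), hF.sum_killingForm_eq hB hinv]
  ring

theorem apply_sum_lie_self_eq_zero [Free R g] [Module.Finite R g]
    (hF : IsLagrangianFrame B g e f) (hB : B.IsSymm)
    (hinv : ∀ x y z : D, B ⁅x, y⁆ z = B x ⁅y, z⁆) (hlag : B.orthogonal g ≤ g)
    (huni : ∀ x : g, trace R g (LieAlgebra.ad R g x) = 0) :
    B (∑ k, ⁅e k, f k⁆) (∑ k, ⁅e k, f k⁆) = 0 := by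
  have hmem : ∑ k, ⁅e k, f k⁆ ∈ g := hlag <| mem_orthogonal_iff.2 fun x hx =>
    (hF.apply_sum_lie_eq_trace hB hinv ⟨x, hx⟩).trans (huni ⟨x, hx⟩)
  exact hF.isotropic _ hmem _ hmem

end IsLagrangianFrame

end Lie

section Field

variable {K D : Type*} [Field K] [AddCommGroup D] [Module K D] {B : BilinForm K D}
  {p : Submodule K D}

theorem mem_orthogonal_of_basis {τ : Type*} (bp : Basis τ K p) {y : D}
    (h : ∀ i, B (bp i) y = 0) : y ∈ B.orthogonal p := by
  have hzero : B.flip y ∘ₗ p.subtype = 0 := bp.ext fun i => h i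
  exact mem_orthogonal_iff.2 fun z hz => LinearMap.congr_fun hzero ⟨z, hz⟩

theorem exists_apply_eq_of_nondegenerate [FiniteDimensional K D] (hnd : B.Nondegenerate)
    (φ : Dual K p) : ∃ u, ∀ z : p, B u z = φ z := by
  obtain ⟨ψ, hψ⟩ := LinearMap.exists_extend φ
  exact ⟨(B.toDual hnd).symm ψ, fun z => by rw [apply_toDual_symm_apply, ← hψ]; rfl⟩

theorem exists_isotropic_dual [FiniteDimensional K D] [NeZero (2 : K)]
    (hnd : B.Nondegenerate) (hB : B.IsSymm) (hiso : p ≤ B.orthogonal p) (bp : Basis κ K p) :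
    ∃ f : κ → D, (∀ j (z : p), B (f j) z = bp.repr z j) ∧ ∀ i j, B (f i) (f j) = 0 := by
  classical
  choose u hu using fun j => exists_apply_eq_of_nondegenerate hnd (bp.coord j)
  have hp : ∀ k (z : p), B (bp k) z = 0 := fun k z => hiso z.2 _ (bp k).2
  -- `p` is isotropic, so subtracting half the Gram matrix of `u` along `p` keeps the
  -- pairing with `p` and kills the pairings among the `f j`.
  set f : κ → D := fun j => u j - (2⁻¹ : K) • ∑ k, B (u j) (u k) • (bp k : D) with hf_def
  have hf : ∀ j (z : p), B (f j) z = bp.repr z j := fun j z => by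
    simp [hf_def, hp, hu]
  have hfu : ∀ i j, B (f i) (u j) = 2⁻¹ * B (u i) (u j) := fun i j => by
    have hpu : ∀ k, B (bp k) (u j) = if j = k then 1 else 0 := fun k => by
      rw [hB.eq, hu]; simp [Finsupp.single_apply, eq_comm]
    simp only [hf_def, map_sub, map_smul, map_sum, LinearMap.sub_apply, LinearMap.smul_apply,
      LinearMap.sum_apply, smul_eq_mul, hpu]
    simp only [mul_ite, mul_one, mul_zero, Finset.sum_ite_eq, Finset.mem_univ, ↓reduceIte]
    field_simp
    ring
  refine ⟨f, hf, fun i j => ?_⟩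
  have hfe : ∀ k, B (f i) (bp k) = if i = k then 1 else 0 := fun k => by
    rw [hf]; simp [Finsupp.single_apply, eq_comm]
  change B (f i) (u j - (2⁻¹ : K) • ∑ k, B (u j) (u k) • (bp k : D)) = 0
  simp only [map_sub, map_smul, map_sum, smul_eq_mul, hfu, hfe]
  simp [hB.eq (u j)]

theorem isDualPair_of_le_orthogonal (hB : B.IsSymm) (hlag : B.orthogonal p ≤ p)
    (hiso : p ≤ B.orthogonal p) (bp : Basis κ K p) {f : κ → D}
    (hf : ∀ j (z : p), B (f j) z = bp.repr z j) (hff : ∀ i j, B (f i) (f j) = 0) :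
    B.IsDualPair (Sum.elim (fun i => (bp i : D)) f) (Sum.elim f fun i => (bp i : D)) := by
  classical
  have hp : ∀ i j, B (bp i) (bp j) = 0 := fun i j => hiso (bp j).2 _ (bp i).2
  have hfp : ∀ j i, B (f j) (bp i) = if j = i then 1 else 0 := fun j i => by
    rw [hf]; simp [Finsupp.single_apply, eq_comm]
  have hpf : ∀ i j, B (bp i) (f j) = if i = j then 1 else 0 := fun i j => by
    rw [hB.eq, hfp]; simp [eq_comm]
  intro x
  simp only [Fintype.sum_sum_type, Sum.elim_inl, Sum.elim_inr]
  set y := x - (∑ j, B (f j) x • (bp j : D) + ∑ j, B (bp j) x • f j) with hy_def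
  have hyp : y ∈ p := hlag <| mem_orthogonal_of_basis bp fun i => by
    simp [hy_def, hp, hpf]
  have hyf : ∀ j, B (f j) y = 0 := fun j => by
    simp [hy_def, hff, hfp]
  have hy : y = 0 := by
    have : bp.repr ⟨y, hyp⟩ = 0 := Finsupp.ext fun j => by rw [← hf]; exact hyf j
    simpa using this
  rw [hy_def, sub_eq_zero] at hy
  exact hy.symm

end Field

end LinearMap.BilinForm

/-- For a quadratic Lie algebra `(𝔡, B)` with a Lagrangian, unimodular Lie
subalgebra `𝔤`, the full contraction `⟨χ,χ⟩` of the Cartan 3-form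
`χ(x,y,z) = ⟨[x,y],z⟩` with itself (via any `B`-dual pair of bases) vanishes. -/
theorem stmt9 (D : Type*) [LieRing D] [LieAlgebra ℝ D] [FiniteDimensional ℝ D]
    (B : LinearMap.BilinForm ℝ D) (hnd : B.Nondegenerate) (hsymm : B.IsSymm)
    (hinv : ∀ x y z : D, B ⁅x, y⁆ z = B x ⁅y, z⁆)
    (g : LieSubalgebra ℝ D) (hlag : (g : Submodule ℝ D) = B.orthogonal ↑g)
    (huni : ∀ x : g, LinearMap.trace ℝ g (LieAlgebra.ad ℝ g x) = 0)
    (ι : Type*) [Fintype ι] [DecidableEq ι] (b : Module.Basis ι ℝ D) (c : ι → D)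
    (hdual : ∀ μ ν : ι, B (c μ) (b ν) = if μ = ν then 1 else 0) :
    ∑ l : ι, ∑ m : ι, ∑ n : ι,
      B ⁅b l, b m⁆ (b n) * B ⁅c l, c m⁆ (c n) = 0 := by
  let bg := Module.finBasis ℝ (g : Submodule ℝ D)
  obtain ⟨f, hf, hff⟩ := B.exists_isotropic_dual hnd hsymm hlag.le bg
  have hF : B.IsLagrangianFrame g (fun i => (bg i : D)) f :=
    ⟨fun i => (bg i).2, fun x hx y hy => hlag.le hy x hx,
      B.isDualPair_of_le_orthogonal hsymm hlag.ge hlag.le bg hf hff⟩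
  have hbc := B.isDualPair_of_basis b hdual
  rw [B.sum_cartan_mul_cartan_eq_neg_killingForm hsymm hinv hbc,
    hF.isDualPair.sum_apply_eq_sum_apply hsymm hbc, hF.sum_killingForm_sumElim hsymm hinv,
    hF.apply_sum_lie_self_eq_zero hsymm hinv hlag.ge huni, mul_zero, neg_zero]
end

section
/- Let (𝔡, ⟨·,·⟩) be a quadratic Lie algebra with Cartan 3-form χ(x,y,z) = ⟨[x,y],z⟩, and let k: 𝔡 × 𝔡 × 𝔡 → ℝ be a trilinear form satisfying (i) k(x,y,z) = −k(x,z,y) for all x,y,z, and (ii) k(x,y,z) + k(y,z,x) + k(z,x,y) = −χ(x,y,z) for all x,y,z. Then for any basis (t_μ) of 𝔡 with ⟨·,·⟩-dual basis (t^μ): ½ ∑_{λ,μ,ν} k(t_λ,t_μ,t_ν) · ( k(t^λ,t^μ,t^ν) − 2 k(t^μ,t^λ,t^ν) ) = (1/6) ∑_{λ,μ,ν} χ(t_λ,t_μ,t_ν) · χ(t^λ,t^μ,t^ν). (In the paper this says that the canonical generalized scalar curvature of any torsion-free metric connection on the Courant algebroid 𝔡 over a point equals ⟨χ,χ⟩_𝔡.)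 -/
/-!
Write `T l m n = k(t_l, t_m, t_n)` and `U l m n = k(t^l, t^m, t^n)`. Condition (ii) says that the
Cartan form is minus the cyclic sum of `k`, so the right-hand side is `⅙ ∑ cyc T · cyc U`.
Relabelling the summation indices cyclically, each of the three terms of `cyc T` contributes the
same amount against the rotation-invariant `cyc U`, which leaves `½ ∑ T · cyc U`. Of the three
terms of `cyc U`, the last two agree after swapping the last two indices, by the skew-symmetry (i)
of `k`.
-/

open Finset

section TripleSums

variable {ι R : Type*} [CommRing R]

def cyclicSum (T : ι → ι → ι → R) (l m n : ι) : R := T l m n + T m n l + T n l m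

lemma cyclicSum_rotate (T : ι → ι → ι → R) (l m n : ι) :
    cyclicSum T m n l = cyclicSum T l m n := by
  simp only [cyclicSum]; ring

variable [Fintype ι]

lemma sum_sum_sum_rotate (g : ι → ι → ι → R) :
    ∑ l, ∑ m, ∑ n, g m n l = ∑ l, ∑ m, ∑ n, g l m n := by
  rw [sum_comm]
  exact sum_congr rfl fun _ _ => sum_comm

lemma sum_cyclicSum_mul_of_rotate_invariant (T W : ι → ι → ι → R)
    (hW : ∀ l m n, W m n l = W l m n) :
    ∑ l, ∑ m, ∑ n, cyclicSum T l m n * W l m n = 3 * ∑ l, ∑ m, ∑ n, T l m n * W l m n := by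
  have rotated_once : ∑ l, ∑ m, ∑ n, T m n l * W l m n = ∑ l, ∑ m, ∑ n, T l m n * W l m n :=
    calc ∑ l, ∑ m, ∑ n, T m n l * W l m n
        = ∑ l, ∑ m, ∑ n, T m n l * W m n l :=
          sum_congr rfl fun l _ => sum_congr rfl fun m _ => sum_congr rfl fun n _ => by
            rw [hW l m n]
      _ = _ := sum_sum_sum_rotate fun l m n => T l m n * W l m n
  have rotated_twice : ∑ l, ∑ m, ∑ n, T n l m * W l m n = ∑ l, ∑ m, ∑ n, T l m n * W l m n :=
    calc ∑ l, ∑ m, ∑ n, T n l m * W l m n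
        = ∑ l, ∑ m, ∑ n, T n l m * W n l m :=
          sum_congr rfl fun l _ => sum_congr rfl fun m _ => sum_congr rfl fun n _ => by
            rw [hW m n l, hW l m n]
      _ = _ := (sum_sum_sum_rotate fun l m n => T n l m * W n l m).symm
  simp only [cyclicSum, add_mul, sum_add_distrib, rotated_once, rotated_twice]
  ring

lemma sum_mul_cyclicSum_of_skew (T U : ι → ι → ι → R)
    (hT : ∀ l m n, T l n m = -T l m n) (hU : ∀ l m n, U l n m = -U l m n) :
    ∑ l, ∑ m, ∑ n, T l m n * cyclicSum U l m n =
      ∑ l, ∑ m, ∑ n, T l m n * (U l m n - 2 * U m l n) := by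
  have swap : ∑ l, ∑ m, ∑ n, T l m n * U n l m = ∑ l, ∑ m, ∑ n, T l m n * U m n l :=
    calc ∑ l, ∑ m, ∑ n, T l m n * U n l m
        = ∑ l, ∑ m, ∑ n, T l n m * U m l n := sum_congr rfl fun _ _ => sum_comm
      _ = _ := sum_congr rfl fun l _ => sum_congr rfl fun m _ => sum_congr rfl fun n _ => by
          rw [hT, hU, neg_mul_neg]
  have pointwise (l m n : ι) :
      T l m n * (U l m n - 2 * U m l n) = T l m n * U l m n + 2 * (T l m n * U m n l) := by
    rw [hU m n l]; ring
  simp only [cyclicSum, mul_add, sum_add_distrib, swap, pointwise, ← mul_sum]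
  ring

end TripleSums

theorem stmt10_general (D : Type*) [LieRing D] [LieAlgebra ℝ D]
    (B : LinearMap.BilinForm ℝ D)
    (k : D →ₗ[ℝ] D →ₗ[ℝ] D →ₗ[ℝ] ℝ)
    (hskew : ∀ x y z : D, k x y z = - k x z y)
    (htor : ∀ x y z : D, k x y z + k y z x + k z x y = - B ⁅x, y⁆ z)
    (ι : Type*) [Fintype ι] (b : Module.Basis ι ℝ D) (c : ι → D) :
    (1 / 2 : ℝ) * ∑ l : ι, ∑ m : ι, ∑ n : ι,
        k (b l) (b m) (b n) * (k (c l) (c m) (c n) - 2 * k (c m) (c l) (c n)) =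
      (1 / 6 : ℝ) * ∑ l : ι, ∑ m : ι, ∑ n : ι,
        B ⁅b l, b m⁆ (b n) * B ⁅c l, c m⁆ (c n) := by
  set T : ι → ι → ι → ℝ := fun l m n => k (b l) (b m) (b n)
  set U : ι → ι → ι → ℝ := fun l m n => k (c l) (c m) (c n)
  have cartan (e : ι → D) (l m n : ι) :
      B ⁅e l, e m⁆ (e n) = -cyclicSum (fun l m n => k (e l) (e m) (e n)) l m n := by
    simp only [cyclicSum, htor]; ring
  have skew (e : ι → D) (l m n : ι) : k (e l) (e n) (e m) = -k (e l) (e m) (e n) :=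
    hskew _ _ _
  have key := sum_cyclicSum_mul_of_rotate_invariant T (cyclicSum U) (cyclicSum_rotate U)
  rw [sum_mul_cyclicSum_of_skew T U (skew b) (skew c)] at key
  simp only [cartan, neg_mul_neg]
  rw [key]
  ring

/-- **Canonical generalized scalar curvature over a point.**
Let `(𝔡, B)` be a quadratic Lie algebra with Cartan 3-form `χ(x,y,z) = B ⁅x,y⁆ z`,
and let `k` be a trilinear form with (i) `k x y z = −k x z y` and
(ii) `k x y z + k y z x + k z x y = −χ x y z` (a torsion-free metric connection).
Then for any `B`-dual pair of bases `(b, c)`: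
`½ ∑ k(b_λ,b_μ,b_ν)(k(c_λ,c_μ,c_ν) − 2 k(c_μ,c_λ,c_ν)) = ⅙ ∑ χ(b_λ,b_μ,b_ν) χ(c_λ,c_μ,c_ν)`. -/
theorem stmt10 (D : Type*) [LieRing D] [LieAlgebra ℝ D] [FiniteDimensional ℝ D]
    (B : LinearMap.BilinForm ℝ D) (hnd : B.Nondegenerate) (hsymm : B.IsSymm)
    (hinvar : ∀ x y z : D, B ⁅x, y⁆ z = B x ⁅y, z⁆)
    (k : D →ₗ[ℝ] D →ₗ[ℝ] D →ₗ[ℝ] ℝ)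
    (hskew : ∀ x y z : D, k x y z = - k x z y)
    (htor : ∀ x y z : D, k x y z + k y z x + k z x y = - B ⁅x, y⁆ z)
    (ι : Type*) [Fintype ι] [DecidableEq ι] (b : Module.Basis ι ℝ D) (c : ι → D)
    (hdual : ∀ μ ν : ι, B (c μ) (b ν) = if μ = ν then 1 else 0) :
    (1 / 2 : ℝ) * ∑ l : ι, ∑ m : ι, ∑ n : ι,
        k (b l) (b m) (b n) * (k (c l) (c m) (c n) - 2 * k (c m) (c l) (c n)) =
      (1 / 6 : ℝ) * ∑ l : ι, ∑ m : ι, ∑ n : ι,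
        B ⁅b l, b m⁆ (b n) * B ⁅c l, c m⁆ (c n) :=
  stmt10_general D B k hskew htor ι b c
end

section
/- Let (𝔡, ⟨·,·⟩) be a quadratic Lie algebra with Cartan 3-form χ(x,y,z) = ⟨[x,y],z⟩, and let k: 𝔡 × 𝔡 × 𝔡 → ℝ be trilinear with (i) k(x,y,z) = −k(x,z,y), (ii) k(x,y,z) + k(y,z,x) + k(z,x,y) = −χ(x,y,z), and (iii) ∑_μ k(t_μ, z, t^μ) = 0 for all z ∈ 𝔡 (divergence-free). For f ∈ 𝔡*, let ♯f ∈ 𝔡 denote the unique element with ⟨♯f, v⟩ = f(v) for all v. Define Ric(x,y) := ½ ∑_μ [ k(♯(k(·, t_μ, y)), x, t^μ) − k(y, ♯(k(t_μ, x, ·)), t^μ) − k(t^μ, ♯(k(x, t_μ, ·)), y) + k([t_μ, x], y, t^μ) + k([t_μ, y], x, t^μ) ]. Then Ric(x,y) = ½ ∑_{λ,μ} k(t_λ, t_μ, y) · ( k(t^λ, t^μ, x) − 2 k(t^μ, t^λ, x) ) for all x, y ∈ 𝔡. -/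
/-!
Expand every `♯` and every bracket in the basis `t_μ`: `♯f = ∑_λ f(t^λ) t_λ`, and by the torsion
identity `⟨[u,v], t^λ⟩ = -(k(u,v,t^λ) + k(v,t^λ,u) + k(t^λ,u,v))`. Then `Ric` is a sum of nine
double contractions of `k ⊗ k`. As `⟨·,·⟩` is symmetric, a contraction `∑_μ f(t_μ) g(t^μ)` is
unchanged when `t_μ` and `t^μ` are exchanged; together with the antisymmetry of `k` this lets the
three `♯`-terms cancel three of the six torsion terms, and the remaining three are the right-hand
side.
-/

open Finset

namespace LinearMap.BilinForm

section DualBasis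

variable {R M ι : Type*} [CommSemiring R] [AddCommMonoid M] [Module R M] [DecidableEq ι]
  {B : LinearMap.BilinForm R M} {b : Module.Basis ι R M} {c : ι → M}

theorem apply_dual_eq_repr (hdual : ∀ μ ν : ι, B (c μ) (b ν) = if μ = ν then 1 else 0)
    (l : ι) (w : M) : B (c l) w = b.repr w l := by
  have : B (c l) = b.coord l := b.ext fun ν => by
    simp [hdual, Finsupp.single_apply, eq_comm]
  rw [this, Module.Basis.coord_apply]

variable [Fintype ι]

theorem apply_eq_sum_dual_mul (hdual : ∀ μ ν : ι, B (c μ) (b ν) = if μ = ν then 1 else 0)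
    (f : M →ₗ[R] R) (w : M) : f w = ∑ l, B (c l) w * f (b l) := by
  simp only [apply_dual_eq_repr hdual, ← smul_eq_mul, ← map_smul, ← map_sum, b.sum_repr]

theorem eq_sum_smul_of_apply_eq (hB : B.IsSymm)
    (hdual : ∀ μ ν : ι, B (c μ) (b ν) = if μ = ν then 1 else 0) {w : M} {f : M →ₗ[R] R}
    (hw : ∀ v, B w v = f v) : w = ∑ l, f (c l) • b l := by
  conv_lhs => rw [← b.sum_repr w]
  refine sum_congr rfl fun l _ => ?_
  rw [← apply_dual_eq_repr hdual, hB.eq, hw]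

theorem sum_mul_dual_comm (hB : B.IsSymm)
    (hdual : ∀ μ ν : ι, B (c μ) (b ν) = if μ = ν then 1 else 0) (f g : M →ₗ[R] R) :
    ∑ m, f (b m) * g (c m) = ∑ m, f (c m) * g (b m) := by
  simp only [apply_eq_sum_dual_mul hdual f (c _), apply_eq_sum_dual_mul hdual g (c _), mul_sum,
    sum_mul]
  rw [sum_comm]
  refine sum_congr rfl fun m _ => sum_congr rfl fun l _ => ?_
  rw [hB.eq (c l)]
  ring

end DualBasis

section Contraction

variable {R M ι : Type*} [CommRing R] [AddCommGroup M] [Module R M] [Fintype ι]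
  {k : M →ₗ[R] M →ₗ[R] M →ₗ[R] R}

theorem sum_sum_mul_symm (b c : ι → M) (u v : M) :
    ∑ m, ∑ l, k (b m) u (c l) * k (b l) v (c m) = ∑ m, ∑ l, k (b m) v (c l) * k (b l) u (c m) := by
  rw [sum_comm]
  exact sum_congr rfl fun m _ => sum_congr rfl fun l _ => mul_comm _ _

theorem sum_sum_mul_eq_neg_of_skew (hskew : ∀ x y z : M, k x y z = - k x z y) (b c : ι → M)
    (u v : M) :
    ∑ m, ∑ l, k (b m) u (c l) * k v (b l) (c m) = -∑ m, ∑ l, k v (c l) (b m) * k (b l) u (c m) := by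
  rw [sum_comm, ← sum_neg_distrib]
  refine sum_congr rfl fun m _ => ?_
  rw [← sum_neg_distrib]
  refine sum_congr rfl fun l _ => ?_
  rw [hskew v]
  ring

variable [DecidableEq ι] {B : LinearMap.BilinForm R M} {b : Module.Basis ι R M} {c : ι → M}

theorem sum_sum_mul_dual_swap_eq_neg (hB : B.IsSymm)
    (hdual : ∀ μ ν : ι, B (c μ) (b ν) = if μ = ν then 1 else 0)
    (hskew : ∀ x y z : M, k x y z = - k x z y) (u v : M) :
    ∑ m, ∑ l, k u (b m) (c l) * k (c m) (b l) v = -∑ m, ∑ l, k u (c l) (b m) * k (b l) v (c m) := by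
  calc ∑ m, ∑ l, k u (b m) (c l) * k (c m) (b l) v
      = ∑ m, ∑ l, k u (b m) (b l) * k (c m) (c l) v := sum_congr rfl fun m _ => by
        simpa using (sum_mul_dual_comm hB hdual (k u (b m)) ((k (c m)).flip v)).symm
    _ = ∑ l, ∑ m, k u (b m) (b l) * k (c m) (c l) v := sum_comm
    _ = ∑ l, ∑ m, k u (c m) (b l) * k (b m) (c l) v := sum_congr rfl fun l _ => by
        simpa using sum_mul_dual_comm hB hdual ((k u).flip (b l)) ((k.flip (c l)).flip v)
    _ = -∑ m, ∑ l, k u (c l) (b m) * k (b l) v (c m) := by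
        simp only [hskew (b _) (c _) v, mul_neg, sum_neg_distrib]

theorem sum_sum_mul_eq_cross (hB : B.IsSymm)
    (hdual : ∀ μ ν : ι, B (c μ) (b ν) = if μ = ν then 1 else 0)
    (hskew : ∀ x y z : M, k x y z = - k x z y) (u v : M) :
    ∑ m, ∑ l, k (b m) u (c l) * k (b l) v (c m) = ∑ l, ∑ m, k (b l) (b m) v * k (c m) (c l) u := by
  calc ∑ m, ∑ l, k (b m) u (c l) * k (b l) v (c m)
      = ∑ l, ∑ m, k (b l) (c m) v * k (b m) (c l) u := by
        rw [sum_comm]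
        refine sum_congr rfl fun l _ => sum_congr rfl fun m _ => ?_
        rw [hskew (b m), hskew (b l)]
        ring
    _ = ∑ l, ∑ m, k (b l) (b m) v * k (c m) (c l) u := sum_congr rfl fun l _ => by
        simpa using (sum_mul_dual_comm hB hdual ((k (b l)).flip v) ((k.flip (c l)).flip u)).symm

theorem sum_sum_mul_eq_neg_parallel (hB : B.IsSymm)
    (hdual : ∀ μ ν : ι, B (c μ) (b ν) = if μ = ν then 1 else 0)
    (hskew : ∀ x y z : M, k x y z = - k x z y) (u v : M) :
    ∑ m, ∑ l, k (c l) (b m) u * k (b l) v (c m) = -∑ l, ∑ m, k (b l) (b m) v * k (c l) (c m) u := by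
  calc ∑ m, ∑ l, k (c l) (b m) u * k (b l) v (c m)
      = -∑ l, ∑ m, k (b l) (c m) v * k (c l) (b m) u := by
        rw [sum_comm]
        simp only [hskew (b _) v, neg_mul, sum_neg_distrib, mul_comm (k (c _) (b _) u)]
    _ = -∑ l, ∑ m, k (b l) (b m) v * k (c l) (c m) u := by
        congr 1
        exact sum_congr rfl fun l _ => by
          simpa using (sum_mul_dual_comm hB hdual ((k (b l)).flip v) ((k (c l)).flip u)).symm

end Contraction

section Torsion

variable {R L ι : Type*} [CommRing R] [LieRing L] [LieAlgebra R L] [DecidableEq ι] [Fintype ι]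
  {B : LinearMap.BilinForm R L} {b : Module.Basis ι R L} {c : ι → L}

theorem lie_eq_sum_smul (hB : B.IsSymm)
    (hdual : ∀ μ ν : ι, B (c μ) (b ν) = if μ = ν then 1 else 0) {k : L →ₗ[R] L →ₗ[R] L →ₗ[R] R}
    (htor : ∀ x y z : L, k x y z + k y z x + k z x y = - B ⁅x, y⁆ z) (u v : L) :
    ⁅u, v⁆ = ∑ l, (-(k u v (c l) + k v (c l) u + k (c l) u v)) • b l :=
  eq_sum_smul_of_apply_eq (f := -(k u v + (k v).flip u + (k.flip u).flip v)) hB hdual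
    fun w => by
      simp only [LinearMap.neg_apply, LinearMap.add_apply, LinearMap.flip_apply]
      linear_combination htor u v w

end Torsion

end LinearMap.BilinForm

open LinearMap.BilinForm

theorem stmt11_general (D : Type*) [LieRing D] [LieAlgebra ℝ D]
    (B : LinearMap.BilinForm ℝ D) (hsymm : B.IsSymm)
    (sharp : Module.Dual ℝ D →ₗ[ℝ] D)
    (hsharp : ∀ (f : Module.Dual ℝ D) (v : D), B (sharp f) v = f v)
    (k : D →ₗ[ℝ] D →ₗ[ℝ] D →ₗ[ℝ] ℝ)
    (hskew : ∀ x y z : D, k x y z = - k x z y)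
    (htor : ∀ x y z : D, k x y z + k y z x + k z x y = - B ⁅x, y⁆ z)
    (ι : Type*) [Fintype ι] [DecidableEq ι] (b : Module.Basis ι ℝ D) (c : ι → D)
    (hdual : ∀ μ ν : ι, B (c μ) (b ν) = if μ = ν then 1 else 0) :
    ∀ x y : D,
      (1 / 2 : ℝ) * ∑ m : ι,
        (k (sharp ((k.flip (b m)).flip y)) x (c m)
          - k y (sharp (k (b m) x)) (c m)
          - k (c m) (sharp (k x (b m))) y
          + k ⁅b m, x⁆ y (c m)
          + k ⁅b m, y⁆ x (c m)) =
      (1 / 2 : ℝ) * ∑ l : ι, ∑ m : ι,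
        k (b l) (b m) y * (k (c l) (c m) x - 2 * k (c m) (c l) x) := by
  intro x y
  have hsharp_eq := fun f => eq_sum_smul_of_apply_eq hsymm hdual (hsharp f)
  simp only [hsharp_eq, lie_eq_sum_smul hsymm hdual htor, map_sum, map_smul, LinearMap.sum_apply,
    LinearMap.smul_apply, smul_eq_mul, LinearMap.flip_apply, neg_mul, add_mul, sum_add_distrib,
    sum_neg_distrib, sum_sub_distrib]
  -- the first `♯`-term is already the last torsion term of `⁅b m, y⁆`
  rw [sum_sum_mul_eq_neg_of_skew hskew b c x y, sum_sum_mul_dual_swap_eq_neg hsymm hdual hskew x y,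
    sum_sum_mul_symm b c y x, sum_sum_mul_eq_cross hsymm hdual hskew x y,
    sum_sum_mul_eq_neg_parallel hsymm hdual hskew x y]
  simp only [mul_sub, sum_sub_distrib, mul_left_comm _ (2 : ℝ), ← mul_sum]
  ring

/-- **The generalized Ricci tensor of a divergence-free torsion-free metric
connection over a point.**
With `k` trilinear, antisymmetric in the last two slots, satisfying the
torsion-free identity with the Cartan 3-form and divergence-free, and with `♯`
the musical isomorphism of `B`, the generalized Ricci tensor
`Ric(x,y) = ½ ∑_μ [ k(♯k(·,t_μ,y), x, t^μ) − k(y, ♯k(t_μ,x,·), t^μ)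
 − k(t^μ, ♯k(x,t_μ,·), y) + k([t_μ,x],y,t^μ) + k([t_μ,y],x,t^μ) ]`
equals `½ ∑_{λμ} k(t_λ,t_μ,y) (k(t^λ,t^μ,x) − 2 k(t^μ,t^λ,x))`. -/
theorem stmt11 (D : Type*) [LieRing D] [LieAlgebra ℝ D] [FiniteDimensional ℝ D]
    (B : LinearMap.BilinForm ℝ D) (hnd : B.Nondegenerate) (hsymm : B.IsSymm)
    (hinvar : ∀ x y z : D, B ⁅x, y⁆ z = B x ⁅y, z⁆)
    (sharp : Module.Dual ℝ D →ₗ[ℝ] D)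
    (hsharp : ∀ (f : Module.Dual ℝ D) (v : D), B (sharp f) v = f v)
    (k : D →ₗ[ℝ] D →ₗ[ℝ] D →ₗ[ℝ] ℝ)
    (hskew : ∀ x y z : D, k x y z = - k x z y)
    (htor : ∀ x y z : D, k x y z + k y z x + k z x y = - B ⁅x, y⁆ z)
    (ι : Type*) [Fintype ι] [DecidableEq ι] (b : Module.Basis ι ℝ D) (c : ι → D)
    (hdual : ∀ μ ν : ι, B (c μ) (b ν) = if μ = ν then 1 else 0)
    (hdivfree : ∀ z : D, ∑ m : ι, k (b m) z (c m) = 0) :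
    ∀ x y : D,
      (1 / 2 : ℝ) * ∑ m : ι,
        (k (sharp ((k.flip (b m)).flip y)) x (c m)
          - k y (sharp (k (b m) x)) (c m)
          - k (c m) (sharp (k x (b m))) y
          + k ⁅b m, x⁆ y (c m)
          + k ⁅b m, y⁆ x (c m)) =
      (1 / 2 : ℝ) * ∑ l : ι, ∑ m : ι,
        k (b l) (b m) y * (k (c l) (c m) x - 2 * k (c m) (c l) x) :=
  stmt11_general D B hsymm sharp hsharp k hskew htor ι b c hdual
end

section
/- Let (𝔡, ⟨·,·⟩) be a quadratic Lie algebra with Cartan 3-form χ(x,y,z) = ⟨[x,y],z⟩. Let 𝓔₊ ⊆ 𝔡 be a subspace on which ⟨·,·⟩ is positive definite, with 𝓔₋ := 𝓔₊^⊥ satisfying 𝔡 = 𝓔₊ ⊕ 𝓔₋ and ⟨·,·⟩ negative definite on 𝓔₋. Let k: 𝔡×𝔡×𝔡 → ℝ be trilinear with (i) k(x,y,z) = −k(x,z,y), (ii) k(x,y,z)+k(y,z,x)+k(z,x,y) = −χ(x,y,z), (iii) ∑_μ k(t_μ, z, t^μ) = 0 for all z, and (iv) k(x, u, v) = 0 whenever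 u ∈ 𝓔₊ and v ∈ 𝓔₋. Define Ric(x,y) := ½ ∑_{λ,μ} k(t_λ,t_μ,y)(k(t^λ,t^μ,x) − 2k(t^μ,t^λ,x)). Fix a basis (v_j) of 𝓔₊ and a basis (u_i) of 𝓔₋, and let (v^j) be the basis of 𝓔₊ with ⟨v^j, v_l⟩ = δ^j_l and (u^i) the basis of 𝓔₋ with ⟨u^i, u_l⟩ = −δ^i_l. Then for every x ∈ 𝓔₊ and y ∈ 𝓔₋: Ric(x,y) = −∑_{i,j} χ(u_i, v_j, x) · χ(u^i, v^j, y). In particular Ric(𝓔₊, 𝓔₋) does not depend on the choice of k satisfying (i)–(iv). -/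
/-!
For a symmetric form the contraction `∑ μ, φ (t_μ) * ψ (t^μ)` does not depend on the dual pair
`(t_μ, t^μ)`, so `Ric` may be computed in the pair adapted to `𝔡 = 𝓔₊ ⊕ 𝓔₋` formed by
`(v_j, u_i)` and `(v^j, -u^i)`. There, compatibility of `k` with `𝓔₊` kills every block except
the one pairing an `𝓔₊`-index with an `𝓔₋`-index, and on that block the torsion condition turns
`k` into the Cartan form, because the other two terms of its cyclic sum vanish.
-/

open LinearMap (BilinForm)

section DualPair

variable {R M : Type*} [CommRing R] [AddCommGroup M] [Module R M]
  {ι κ : Type*} [Fintype ι] [Fintype κ]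

theorem Module.Basis.sum_apply_smul_eq_self [DecidableEq ι] (b : Module.Basis ι R M)
    (f : ι → M →ₗ[R] R) (hf : ∀ μ ν, f μ (b ν) = if μ = ν then 1 else 0) (w : M) :
    ∑ μ, f μ w • b μ = w := by
  have hcoord : ∀ μ, f μ = b.coord μ := fun μ =>
    b.ext fun ν => by simp [hf, Finsupp.single_apply, eq_comm]
  simp [hcoord, b.sum_repr w]

def LinearMap.BilinForm.IsDualPair_s12 (B : BilinForm R M) (b c : ι → M) : Prop :=
  ∀ w, ∑ μ, B (c μ) w • b μ = w

theorem LinearMap.BilinForm.IsDualPair_s12.sum_mul_eq {B : BilinForm R M} (hB : B.IsSymm)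
    {b c : ι → M} {b' c' : κ → M} (h : B.IsDualPair_s12 b c) (h' : B.IsDualPair_s12 b' c')
    (φ ψ : M →ₗ[R] R) :
    ∑ μ, φ (b μ) * ψ (c μ) = ∑ ν, φ (c' ν) * ψ (b' ν) := by
  calc ∑ μ, φ (b μ) * ψ (c μ)
      = ∑ μ, ∑ ν, B (c' ν) (c μ) * φ (b μ) * ψ (b' ν) := by
        refine Finset.sum_congr rfl fun μ _ => ?_
        conv_lhs => rw [← h' (c μ)]
        simp [Finset.mul_sum, mul_left_comm, mul_assoc]
    _ = ∑ ν, φ (∑ μ, B (c μ) (c' ν) • b μ) * ψ (b' ν) := by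
        rw [Finset.sum_comm]
        refine Finset.sum_congr rfl fun ν _ => ?_
        simp only [map_sum, map_smul, smul_eq_mul, Finset.sum_mul, hB.eq (c' ν)]
    _ = ∑ ν, φ (c' ν) * ψ (b' ν) := by simp only [h (c' _)]

theorem LinearMap.BilinForm.isDualPair_sumElim {I J : Type*} [Fintype I] [Fintype J]
    [DecidableEq I] [DecidableEq J] {B : BilinForm R M} (hB : B.IsSymm)
    {E : Submodule R M} (hE : Codisjoint E (B.orthogonal E))
    (vb : Module.Basis J R E) {vd : J → M} (hvd : ∀ j, vd j ∈ E)
    (hvdual : ∀ j l, B (vd j) (vb l) = if j = l then 1 else 0)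
    (ub : Module.Basis I R (B.orthogonal E)) {ud : I → M} (hud : ∀ i, ud i ∈ B.orthogonal E)
    (hudual : ∀ i l, B (ud i) (ub l) = if i = l then -1 else 0) :
    B.IsDualPair_s12 (Sum.elim (fun j => (vb j : M)) (fun i => (ub i : M)))
      (Sum.elim vd fun i => -ud i) := by
  intro w
  obtain ⟨p, q, hp, hq, rfl⟩ := Submodule.codisjoint_iff_exists_add_eq.mp hE w
  have hP : ∑ j, B (vd j) p • (vb j : M) = p := by
    simpa using congrArg Subtype.val <| vb.sum_apply_smul_eq_self
      (fun j => (B (vd j)).comp E.subtype) (by simpa using hvdual) ⟨p, hp⟩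
  have hQ : -∑ i, B (ud i) q • (ub i : M) = q := by
    simpa using congrArg Subtype.val <| ub.sum_apply_smul_eq_self
      (fun i => -(B (ud i)).comp (B.orthogonal E).subtype)
      (fun i l => by by_cases h : i = l <;> simp [hudual, h]) ⟨q, hq⟩
  have hPq : ∀ j, B (vd j) q = 0 := fun j => hq _ (hvd j)
  have hQp : ∀ i, B (ud i) p = 0 := fun i => (hB.eq _ _).trans (hud i p hp)
  simp [Fintype.sum_sum_type, add_smul, Finset.sum_add_distrib, hPq, hQp, hP, hQ]

end DualPair

section Trilinear

variable {R L : Type*} [CommRing R] [LieRing L] [LieAlgebra R L]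
  {B : BilinForm R L} {k : L →ₗ[R] L →ₗ[R] L →ₗ[R] R}

theorem trilinear_apply_eq_neg_lie_of_mem {P Q : Submodule R L}
    (htor : ∀ x y z, k x y z + k y z x + k z x y = -B ⁅x, y⁆ z)
    (hPQ : ∀ x, ∀ u ∈ P, ∀ v ∈ Q, k x u v = 0) (hQP : ∀ x, ∀ v ∈ Q, ∀ u ∈ P, k x v u = 0)
    {u v w : L} (hu : u ∈ P) (hv : v ∈ Q) (hw : w ∈ Q) : k u v w = -B ⁅u, v⁆ w := by
  simpa [hQP v w hw u hu, hPQ w u hu v hv] using htor u v w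

end Trilinear

section Ricci
variable {M : Type*} [AddCommGroup M] [Module ℝ M] {ι κ : Type*} [Fintype ι] [Fintype κ]

noncomputable def ricci (k : M →ₗ[ℝ] M →ₗ[ℝ] M →ₗ[ℝ] ℝ) (b c : ι → M) (x y : M) : ℝ :=
  1 / 2 * ∑ l, ∑ m, k (b l) (b m) y * (k (c l) (c m) x - 2 * k (c m) (c l) x)

theorem ricci_eq_of_isDualPair {B : BilinForm ℝ M} (hB : B.IsSymm) {b c : ι → M}
    {b' c' : κ → M} (h : B.IsDualPair_s12 b c) (h' : B.IsDualPair_s12 b' c')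
    (k : M →ₗ[ℝ] M →ₗ[ℝ] M →ₗ[ℝ] ℝ) (x y : M) :
    ricci k b c x y = ricci k c' b' x y := by
  unfold ricci
  congr 1
  calc ∑ l, ∑ m, k (b l) (b m) y * (k (c l) (c m) x - 2 * k (c m) (c l) x)
      = ∑ l, ∑ ν, k (b l) (c' ν) y * (k (c l) (b' ν) x - 2 * k (b' ν) (c l) x) :=
        Finset.sum_congr rfl fun l _ => by
          simpa [LinearMap.sub_apply, LinearMap.smul_apply] using
            h.sum_mul_eq hB h' ((k (b l)).flip y)
              ((k (c l)).flip x - (2 : ℝ) • (k.flip (c l)).flip x)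
    _ = ∑ ν, ∑ l, k (b l) (c' ν) y * (k (c l) (b' ν) x - 2 * k (b' ν) (c l) x) :=
        Finset.sum_comm
    _ = ∑ ν, ∑ ν', k (c' ν') (c' ν) y * (k (b' ν') (b' ν) x - 2 * k (b' ν) (b' ν') x) :=
        Finset.sum_congr rfl fun ν _ => by
          simpa [LinearMap.sub_apply, LinearMap.smul_apply] using
            h.sum_mul_eq hB h' ((k.flip (c' ν)).flip y)
              ((k.flip (b' ν)).flip x - (2 : ℝ) • (k (b' ν)).flip x)
    _ = _ := Finset.sum_comm

end Ricci

section Block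

variable {L : Type*} [LieRing L] [LieAlgebra ℝ L] {I J : Type*} [Fintype I] [Fintype J]

theorem ricci_sumElim_eq {B : BilinForm ℝ L} {E : Submodule ℝ L}
    {k : L →ₗ[ℝ] L →ₗ[ℝ] L →ₗ[ℝ] ℝ} (hskew : ∀ x y z, k x y z = -k x z y)
    (htor : ∀ x y z, k x y z + k y z x + k z x y = -B ⁅x, y⁆ z)
    (hmetric : ∀ x, ∀ u ∈ E, ∀ v ∈ B.orthogonal E, k x u v = 0)
    {vb vd : J → L} (hvb : ∀ j, vb j ∈ E) (hvd : ∀ j, vd j ∈ E)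
    {ub ud : I → L} (hub : ∀ i, ub i ∈ B.orthogonal E) (hud : ∀ i, ud i ∈ B.orthogonal E)
    {x y : L} (hx : x ∈ E) (hy : y ∈ B.orthogonal E) :
    ricci k (Sum.elim vd fun i => -ud i) (Sum.elim vb ub) x y =
      -∑ i, ∑ j, B ⁅ub i, vb j⁆ x * B ⁅ud i, vd j⁆ y := by
  have hmetric_swap : ∀ x, ∀ v ∈ B.orthogonal E, ∀ u ∈ E, k x v u = 0 := fun x v hv u hu => by
    rw [hskew, hmetric x u hu v hv, neg_zero]
  have hkx : ∀ i j, k (ub i) (vb j) x = -B ⁅ub i, vb j⁆ x := fun i j =>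
    trilinear_apply_eq_neg_lie_of_mem htor hmetric_swap hmetric (hub i) (hvb j) hx
  have hky : ∀ i j, k (vd j) (ud i) y = B ⁅ud i, vd j⁆ y := fun i j => by
    rw [trilinear_apply_eq_neg_lie_of_mem htor hmetric hmetric_swap (hvd j) (hud i) hy,
      ← lie_skew, map_neg, LinearMap.neg_apply, neg_neg]
  simp only [ricci, one_div, Fintype.sum_sum_type, Sum.elim_inl, Sum.elim_inr, map_neg,
    LinearMap.neg_apply, hmetric _ _ (hvd _) _ hy, hmetric_swap _ _ (hub _) _ hx, hkx, hky, zero_mul,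
    mul_zero, zero_sub, mul_neg, neg_mul, neg_neg, zero_add, add_zero, Finset.sum_const_zero,
    Finset.sum_neg_distrib, neg_inj]
  rw [Finset.sum_comm]
  simp only [Finset.mul_sum]
  congr! 2
  ring

end Block

theorem stmt12_general (D : Type*) [LieRing D] [LieAlgebra ℝ D]
    (B : LinearMap.BilinForm ℝ D) (hsymm : B.IsSymm)
    (Eplus : Submodule ℝ D)
    (hcompl : IsCompl Eplus (B.orthogonal Eplus))
    (k : D →ₗ[ℝ] D →ₗ[ℝ] D →ₗ[ℝ] ℝ)
    (hskew : ∀ x y z : D, k x y z = - k x z y)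
    (htor : ∀ x y z : D, k x y z + k y z x + k z x y = - B ⁅x, y⁆ z)
    (hmetric : ∀ x : D, ∀ u ∈ Eplus, ∀ v ∈ B.orthogonal Eplus, k x u v = 0)
    (ι : Type*) [Fintype ι] [DecidableEq ι] (b : Module.Basis ι ℝ D) (c : ι → D)
    (hdual : ∀ μ ν : ι, B (c μ) (b ν) = if μ = ν then 1 else 0)
    (J : Type*) [Fintype J] [DecidableEq J] (vb : Module.Basis J ℝ Eplus)
    (vd : J → D) (hvdmem : ∀ j, vd j ∈ Eplus)
    (hvdual : ∀ j l : J, B (vd j) (vb l) = if j = l then 1 else 0)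
    (I : Type*) [Fintype I] [DecidableEq I] (ub : Module.Basis I ℝ (B.orthogonal Eplus))
    (ud : I → D) (hudmem : ∀ i, ud i ∈ B.orthogonal Eplus)
    (hudual : ∀ i l : I, B (ud i) (ub l) = if i = l then -1 else 0) :
    ∀ x ∈ Eplus, ∀ y ∈ B.orthogonal Eplus,
      (1 / 2 : ℝ) * (∑ l : ι, ∑ m : ι,
          k (b l) (b m) y * (k (c l) (c m) x - 2 * k (c m) (c l) x)) =
        - ∑ i : I, ∑ j : J,
            B ⁅(ub i : D), (vb j : D)⁆ x * B ⁅ud i, vd j⁆ y := by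
  intro x hx y hy
  have hbc : B.IsDualPair_s12 b c := b.sum_apply_smul_eq_self (fun μ => B (c μ)) hdual
  have hadapted := B.isDualPair_sumElim hsymm hcompl.codisjoint vb hvdmem hvdual ub hudmem hudual
  exact (ricci_eq_of_isDualPair hsymm hbc hadapted k x y).trans <|
    ricci_sumElim_eq hskew htor hmetric (fun j => (vb j).2) hvdmem (fun i => (ub i).2) hudmem hx hy

/-- **The mixed Ricci tensor in terms of the Cartan 3-form.**
For a generalized metric `𝓔₊` on a quadratic Lie algebra `(𝔡, B)` (with
`𝓔₋ = 𝓔₊^⊥`) and `k` a divergence-free torsion-free metric connection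
compatible with `𝓔₊`, the generalized Ricci tensor satisfies, for `x ∈ 𝓔₊`,
`y ∈ 𝓔₋`:  `Ric(x,y) = −∑_{ij} χ(u_i,v_j,x) · χ(u^i,v^j,y)`,
independently of the choice of such `k`. -/
theorem stmt12 (D : Type*) [LieRing D] [LieAlgebra ℝ D] [FiniteDimensional ℝ D]
    (B : LinearMap.BilinForm ℝ D) (hnd : B.Nondegenerate) (hsymm : B.IsSymm)
    (hinvar : ∀ x y z : D, B ⁅x, y⁆ z = B x ⁅y, z⁆)
    (Eplus : Submodule ℝ D)
    (hpos : ∀ v ∈ Eplus, v ≠ 0 → 0 < B v v)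
    (hneg : ∀ v ∈ B.orthogonal Eplus, v ≠ 0 → B v v < 0)
    (hcompl : IsCompl Eplus (B.orthogonal Eplus))
    (k : D →ₗ[ℝ] D →ₗ[ℝ] D →ₗ[ℝ] ℝ)
    (hskew : ∀ x y z : D, k x y z = - k x z y)
    (htor : ∀ x y z : D, k x y z + k y z x + k z x y = - B ⁅x, y⁆ z)
    (hmetric : ∀ x : D, ∀ u ∈ Eplus, ∀ v ∈ B.orthogonal Eplus, k x u v = 0)
    (ι : Type*) [Fintype ι] [DecidableEq ι] (b : Module.Basis ι ℝ D) (c : ι → D)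
    (hdual : ∀ μ ν : ι, B (c μ) (b ν) = if μ = ν then 1 else 0)
    (hdivfree : ∀ z : D, ∑ m : ι, k (b m) z (c m) = 0)
    (J : Type*) [Fintype J] [DecidableEq J] (vb : Module.Basis J ℝ Eplus)
    (vd : J → D) (hvdmem : ∀ j, vd j ∈ Eplus)
    (hvdual : ∀ j l : J, B (vd j) (vb l) = if j = l then 1 else 0)
    (I : Type*) [Fintype I] [DecidableEq I] (ub : Module.Basis I ℝ (B.orthogonal Eplus))
    (ud : I → D) (hudmem : ∀ i, ud i ∈ B.orthogonal Eplus)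
    (hudual : ∀ i l : I, B (ud i) (ub l) = if i = l then -1 else 0) :
    ∀ x ∈ Eplus, ∀ y ∈ B.orthogonal Eplus,
      (1 / 2 : ℝ) * (∑ l : ι, ∑ m : ι,
          k (b l) (b m) y * (k (c l) (c m) x - 2 * k (c m) (c l) x)) =
        - ∑ i : I, ∑ j : J,
            B ⁅(ub i : D), (vb j : D)⁆ x * B ⁅ud i, vd j⁆ y :=
  stmt12_general D B hsymm Eplus hcompl k hskew htor hmetric ι b c hdual J vb vd hvdmem hvdual I ub
    ud hudmem hudual
end

section
/- Let (𝔡, 𝔤) be a Manin pair with isotropic splitting j: 𝔤* → 𝔡. For ξ, η ∈ 𝔤* define [ξ,η]_* := q([j(ξ), j(η)]) ∈ 𝔤*, where q(d) = ⟨d,·⟩|_𝔤, and define ad*_x(η) ∈ 𝔤* by (ad*_x η)(z) = −η([x,z]) for x, z ∈ 𝔤, and ad*_ξ(y) ∈ 𝔤 by ζ(ad*_ξ y) = −([ξ,ζ]_*)(y) for ξ, ζ ∈ 𝔤*, y ∈ 𝔤. Then for all x, y ∈ 𝔤 and ξ, η ∈ 𝔤*: ⟨[x,y], [ξ,η]_*⟩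 = ⟨ad*_ξ(y), ad*_x(η)⟩ + ⟨ad*_y(ξ), ad*_η(x)⟩ − ⟨ad*_η(y), ad*_x(ξ)⟩ − ⟨ad*_y(η), ad*_ξ(x)⟩, where ⟨v, α⟩ = ⟨α, v⟩ := α(v) for v ∈ 𝔤, α ∈ 𝔤*. -/
/-- **Duality between bracket and induced cobracket for a split Manin pair.**
Let `(𝔡, 𝔤)` be a Manin pair with isotropic splitting `j : 𝔤* → 𝔡`.
With `[ξ,η]_* := q [j ξ, j η]` where `q d = B d ·|_𝔤`, with
`(ad*_x η)(z) = −η [x,z]` and `ζ (ad*_ξ y) = −([ξ,ζ]_*)(y)` (the latter map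
supplied as data `adstarg`), one has for all `x y ∈ 𝔤`, `ξ η ∈ 𝔤*`:
`⟨[x,y],[ξ,η]_*⟩ = ⟨ad*_ξ y, ad*_x η⟩ + ⟨ad*_y ξ, ad*_η x⟩
 − ⟨ad*_η y, ad*_x ξ⟩ − ⟨ad*_y η, ad*_ξ x⟩`. -/
theorem stmt14 (D : Type*) [LieRing D] [LieAlgebra ℝ D] [FiniteDimensional ℝ D]
    (B : LinearMap.BilinForm ℝ D) (hnd : B.Nondegenerate) (hsymm : B.IsSymm)
    (hinvar : ∀ x y z : D, B ⁅x, y⁆ z = B x ⁅y, z⁆)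
    (g : LieSubalgebra ℝ D) (hlag : (g : Submodule ℝ D) = B.orthogonal ↑g)
    (j : Module.Dual ℝ g →ₗ[ℝ] D)
    (hj : ∀ (ξ : Module.Dual ℝ g) (x : g), B (j ξ) x = ξ x)
    (hjiso : ∀ ξ η : Module.Dual ℝ g, B (j ξ) (j η) = 0)
    (adstarg : Module.Dual ℝ g → g → g)
    (hadstarg : ∀ (ξ ζ : Module.Dual ℝ g) (y : g),
      ζ (adstarg ξ y) = - B ⁅j ξ, j ζ⁆ (y : D)) :
    ∀ (x y : g) (ξ η : Module.Dual ℝ g),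
      B ⁅j ξ, j η⁆ ((⁅x, y⁆ : g) : D) =
        (- η ⁅x, adstarg ξ y⁆) + (- ξ ⁅y, adstarg η x⁆)
          - (- ξ ⁅x, adstarg η y⁆) - (- η ⁅y, adstarg ξ x⁆) := by
  intro x y ξ η
  have hsym : ∀ a b : D, B a b = B b a := fun a b => hsymm.eq a b
  -- the functional q d = B d |_g
  set Q : D → Module.Dual ℝ g := fun d => (B d).comp (g : Submodule ℝ D).subtype with hQdef
  have hQeval : ∀ (d : D) (w : g), Q d w = B d w := fun d w => rfl
  have hQmem : ∀ d : D, d - j (Q d) ∈ g := by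
    intro d
    have h : d - j (Q d) ∈ (g : Submodule ℝ D) := by
      rw [hlag, LinearMap.BilinForm.mem_orthogonal_iff]
      intro n hn
      rw [map_sub]
      have h1 : B (j (Q d)) n = B d n := hj (Q d) ⟨n, hn⟩
      rw [hsym n d, hsym n (j (Q d)), h1]
      ring
    exact h
  -- the g-component of a decomposed element
  set A : Module.Dual ℝ g → g → g :=
    fun θ u => ⟨⁅j θ, (u : D)⁆ - j (Q ⁅j θ, (u : D)⁆), hQmem _⟩ with hAdef
  have hA : ∀ (θ : Module.Dual ℝ g) (u : g),
      (A θ u : D) = ⁅j θ, (u : D)⁆ - j (Q ⁅j θ, (u : D)⁆) := fun θ u => rfl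
  -- K1
  have K1 : ∀ (θ : Module.Dual ℝ g) (u w : g),
      θ ⁅u, w⁆ = B ⁅j θ, (u : D)⁆ w := by
    intro θ u w
    have hc : ((⁅u, w⁆ : g) : D) = ⁅(u : D), (w : D)⁆ := rfl
    rw [← hj θ ⁅u, w⁆, hc, hinvar]
  -- the main term computation
  have hterm : ∀ (ζ θ : Module.Dual ℝ g) (u w : g),
      θ ⁅u, adstarg ζ w⁆ =
        -B ⁅j ζ, ⁅j θ, (u : D)⁆⁆ w - Q ⁅j ζ, (w : D)⁆ (A θ u) := by
    intro ζ θ u w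
    have h1 : θ ⁅u, adstarg ζ w⁆ = Q ⁅j θ, (u : D)⁆ (adstarg ζ w) := by
      rw [K1 θ u (adstarg ζ w)]; rfl
    rw [h1, hadstarg ζ (Q ⁅j θ, (u : D)⁆) w]
    have hrw : j (Q ⁅j θ, (u : D)⁆) = ⁅j θ, (u : D)⁆ - (A θ u : D) := by
      rw [hA]; abel
    rw [hrw, lie_sub, map_sub, LinearMap.sub_apply]
    have h2 : B ⁅j ζ, (A θ u : D)⁆ (w : D) = -Q ⁅j ζ, (w : D)⁆ (A θ u) := by
      rw [← K1 ζ (A θ u) w, ← lie_skew (A θ u) w, map_neg, K1 ζ w (A θ u)]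
      rfl
    rw [h2]; ring
  -- the pairing of the stray terms
  have hpair : ∀ (θ1 θ2 : Module.Dual ℝ g) (u v : g),
      Q ⁅j θ1, (u : D)⁆ (A θ2 v) + Q ⁅j θ2, (v : D)⁆ (A θ1 u) =
        B ⁅j θ1, (u : D)⁆ ⁅j θ2, (v : D)⁆ := by
    intro θ1 θ2 u v
    have hd : (A θ2 v : D) + j (Q ⁅j θ2, (v : D)⁆) = ⁅j θ2, (v : D)⁆ := by
      rw [hA]; abel
    have hd1 : (A θ1 u : D) + j (Q ⁅j θ1, (u : D)⁆) = ⁅j θ1, (u : D)⁆ := by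
      rw [hA]; abel
    conv_rhs => rw [← hd]
    rw [map_add]
    congr 1
    rw [hsym ⁅j θ1, (u : D)⁆ (j (Q ⁅j θ2, (v : D)⁆)), ← hd1, map_add,
      hj (Q ⁅j θ2, (v : D)⁆) (A θ1 u), hjiso, add_zero]
  -- Jacobi identities
  have hcxy : ((⁅x, y⁆ : g) : D) = ⁅(x : D), (y : D)⁆ := rfl
  have jc1 : B ⁅j ξ, ⁅j η, (x : D)⁆⁆ y - B ⁅j η, ⁅j ξ, (x : D)⁆⁆ y
      = B ⁅j ξ, j η⁆ ((⁅x, y⁆ : g) : D) := by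
    rw [hcxy, ← hinvar ⁅j ξ, j η⁆ x y, lie_lie, map_sub, LinearMap.sub_apply]
  have jc2 : B ⁅j η, ⁅j ξ, (y : D)⁆⁆ x - B ⁅j ξ, ⁅j η, (y : D)⁆⁆ x
      = B ⁅j ξ, j η⁆ ((⁅x, y⁆ : g) : D) := by
    have h1 : B ⁅j η, ⁅j ξ, (y : D)⁆⁆ x - B ⁅j ξ, ⁅j η, (y : D)⁆⁆ x
        = B ⁅⁅j η, j ξ⁆, (y : D)⁆ x := by
      rw [lie_lie, map_sub, LinearMap.sub_apply]
    rw [h1, hinvar, hcxy, ← lie_skew (j η) (j ξ), ← lie_skew (y : D) (x : D)]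
    simp only [map_neg, LinearMap.neg_apply, neg_neg]
  have st : B ⁅j ξ, (y : D)⁆ ⁅j η, (x : D)⁆ - B ⁅j η, (y : D)⁆ ⁅j ξ, (x : D)⁆
      = -B ⁅j ξ, j η⁆ ((⁅x, y⁆ : g) : D) := by
    have h1 : B ⁅j ξ, (y : D)⁆ ⁅j η, (x : D)⁆ = B (j ξ) ⁅(y : D), ⁅j η, (x : D)⁆⁆ :=
      hinvar _ _ _
    have h2 : B ⁅j η, (y : D)⁆ ⁅j ξ, (x : D)⁆ = B (j ξ) ⁅(x : D), ⁅j η, (y : D)⁆⁆ := by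
      rw [hsym, hinvar]
    have h3 : ⁅(y : D), ⁅j η, (x : D)⁆⁆ - ⁅(x : D), ⁅j η, (y : D)⁆⁆
        = -⁅j η, ⁅(x : D), (y : D)⁆⁆ := by
      rw [leibniz_lie (j η) (x : D) (y : D), ← lie_skew ⁅j η, (x : D)⁆ (y : D)]
      abel
    rw [h1, h2, ← map_sub, h3, hcxy, hinvar (j ξ) (j η) ⁅(x : D), (y : D)⁆, map_neg]
  -- the four term expansions
  have e1 := hterm ξ η x y
  have e2 := hterm η ξ y x
  have e3 := hterm η ξ x y
  have e4 := hterm ξ η y x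
  have p1 := hpair ξ η y x
  have p2 := hpair η ξ y x
  rw [e1, e2, e3, e4]
  linarith [jc1, jc2, st, p1, p2]
end

section
/- Let (𝔡, 𝔤) be a Manin pair and let j, j': 𝔤* → 𝔡 be isotropic splittings related by j'(ξ) = j(ξ) + θ(ξ) with θ: 𝔤* → 𝔤 linear and skew (η(θ(ξ)) = −ξ(θ(η))). Define μ_j(ξ,η,ζ) := ⟨[j(ξ), j(η)], j(ζ)⟩, similarly μ_{j'}, and [ξ,η]_* := q([j(ξ), j(η)]) ∈ 𝔤*. Then for all ξ, η, ζ ∈ 𝔤*: μ_{j'}(ξ,η,ζ) = μ_j(ξ,η,ζ) + [ ([ξ,η]_*)(θ(ζ)) + ζ([θ(ξ), θ(η)]) ] + [ ([η,ζ]_*)(θ(ξ)) + ξ([θ(η), θ(ζ)]) ] + [ ([ζ,ξ]_*)(θ(η)) + η([θ(ζ), θ(ξ)]) ]. (The change of the 3-vector μ under a change of isotropic splitting: μ' = μ − d_*(θ₀) + ½[[θ₀,θ₀]]_𝔤.) -/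
/-!
Expand `⟨[jξ + θξ, jη + θη], jζ + θζ⟩` trilinearly into eight terms. Invariance and symmetry of
the form make `⟨[x, y], z⟩` cyclic, which moves every term with one `θ` into the shape
`⟨[j·, j·], θ·⟩` and every term with two `θ`s into `⟨j·, [θ·, θ·]⟩`, where `q ∘ j = id` evaluates
it. The term with three `θ`s is `⟨[θξ, θη], θζ⟩ = 0` because `𝔤` is isotropic.
-/

namespace LinearMap.BilinForm

variable {R L : Type*} [CommRing R] [LieRing L] [LieAlgebra R L] {B : LinearMap.BilinForm R L}

theorem apply_lie_cyclic (hsymm : B.IsSymm) (hinvar : ∀ x y z : L, B ⁅x, y⁆ z = B x ⁅y, z⁆)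
    (x y z : L) : B ⁅x, y⁆ z = B ⁅y, z⁆ x := by
  rw [hinvar, hsymm.eq]

theorem apply_lie_add_add (hsymm : B.IsSymm) (hinvar : ∀ x y z : L, B ⁅x, y⁆ z = B x ⁅y, z⁆)
    (a b c u v w : L) :
    B ⁅a + u, b + v⁆ (c + w) =
      B ⁅a, b⁆ c + B ⁅a, b⁆ w + B ⁅b, c⁆ u + B ⁅c, a⁆ v
        + B a ⁅v, w⁆ + B b ⁅w, u⁆ + B c ⁅u, v⁆ + B ⁅u, v⁆ w := by
  have cyc := apply_lie_cyclic hsymm hinvar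
  have hav : B ⁅a, v⁆ c = B ⁅c, a⁆ v := by rw [cyc, cyc]
  have hub : B ⁅u, b⁆ w = B b ⁅w, u⁆ := by
    rw [← lie_skew, map_neg, LinearMap.neg_apply, hinvar, ← lie_skew, map_neg, neg_neg]
  simp only [lie_add, add_lie, map_add, LinearMap.add_apply]
  rw [hav, hub, cyc u b c, hinvar a v w, hsymm.eq ⁅u, v⁆ c]
  ring

end LinearMap.BilinForm

theorem stmt16_general (D : Type*) [LieRing D] [LieAlgebra ℝ D]
    (B : LinearMap.BilinForm ℝ D) (hsymm : B.IsSymm)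
    (hinvar : ∀ x y z : D, B ⁅x, y⁆ z = B x ⁅y, z⁆)
    (g : LieSubalgebra ℝ D) (hlag : (g : Submodule ℝ D) = B.orthogonal ↑g)
    (j j' : Module.Dual ℝ g →ₗ[ℝ] D)
    (hj : ∀ (ξ : Module.Dual ℝ g) (x : g), B (j ξ) x = ξ x)
    (θ : Module.Dual ℝ g →ₗ[ℝ] g)
    (hrel : ∀ ξ : Module.Dual ℝ g, j' ξ = j ξ + (θ ξ : D)) :
    ∀ ξ η ζ : Module.Dual ℝ g,
      B ⁅j' ξ, j' η⁆ (j' ζ) =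
        B ⁅j ξ, j η⁆ (j ζ)
          + (B ⁅j ξ, j η⁆ ((θ ζ : g) : D) + ζ ⁅θ ξ, θ η⁆)
          + (B ⁅j η, j ζ⁆ ((θ ξ : g) : D) + ξ ⁅θ η, θ ζ⁆)
          + (B ⁅j ζ, j ξ⁆ ((θ η : g) : D) + η ⁅θ ζ, θ ξ⁆) := by
  intro ξ η ζ
  have hj_lie : ∀ (α : Module.Dual ℝ g) (x y : g), B (j α) ⁅(x : D), (y : D)⁆ = α ⁅x, y⁆ :=
    fun α x y => hj α ⁅x, y⁆
  have hθθθ : B ⁅(θ ξ : D), (θ η : D)⁆ (θ ζ : D) = 0 :=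
    hlag.le (θ ζ).2 _ (⁅θ ξ, θ η⁆ : g).2
  rw [hrel, hrel, hrel, LinearMap.BilinForm.apply_lie_add_add hsymm hinvar,
    hj_lie, hj_lie, hj_lie, hθθθ]
  ring

/-- **Change of the 3-vector `μ` under a change of isotropic splitting:**
`μ' = μ − d_*(θ₀) + ½[[θ₀,θ₀]]_𝔤`.  With `μ_j(ξ,η,ζ) = ⟨[jξ,jη],jζ⟩` and
`[ξ,η]_* = q [jξ,jη]`, if `j' ξ = j ξ + θ ξ` with `θ` skew, then
`μ_{j'}(ξ,η,ζ) = μ_j(ξ,η,ζ) + ([ξ,η]_*)(θζ) + ζ [θξ,θη]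
 + ([η,ζ]_*)(θξ) + ξ [θη,θζ] + ([ζ,ξ]_*)(θη) + η [θζ,θξ]`. -/
theorem stmt16 (D : Type*) [LieRing D] [LieAlgebra ℝ D] [FiniteDimensional ℝ D]
    (B : LinearMap.BilinForm ℝ D) (hnd : B.Nondegenerate) (hsymm : B.IsSymm)
    (hinvar : ∀ x y z : D, B ⁅x, y⁆ z = B x ⁅y, z⁆)
    (g : LieSubalgebra ℝ D) (hlag : (g : Submodule ℝ D) = B.orthogonal ↑g)
    (j j' : Module.Dual ℝ g →ₗ[ℝ] D)
    (hj : ∀ (ξ : Module.Dual ℝ g) (x : g), B (j ξ) x = ξ x)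
    (hjiso : ∀ ξ η : Module.Dual ℝ g, B (j ξ) (j η) = 0)
    (hj' : ∀ (ξ : Module.Dual ℝ g) (x : g), B (j' ξ) x = ξ x)
    (hj'iso : ∀ ξ η : Module.Dual ℝ g, B (j' ξ) (j' η) = 0)
    (θ : Module.Dual ℝ g →ₗ[ℝ] g)
    (hθ : ∀ ξ η : Module.Dual ℝ g, η (θ ξ) = - ξ (θ η))
    (hrel : ∀ ξ : Module.Dual ℝ g, j' ξ = j ξ + (θ ξ : D)) :
    ∀ ξ η ζ : Module.Dual ℝ g,
      B ⁅j' ξ, j' η⁆ (j' ζ) =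
        B ⁅j ξ, j η⁆ (j ζ)
          + (B ⁅j ξ, j η⁆ ((θ ζ : g) : D) + ζ ⁅θ ξ, θ η⁆)
          + (B ⁅j η, j ζ⁆ ((θ ξ : g) : D) + ξ ⁅θ η, θ ζ⁆)
          + (B ⁅j ζ, j ξ⁆ ((θ η : g) : D) + η ⁅θ ζ, θ ξ⁆) :=
  stmt16_general D B hsymm hinvar g hlag j j' hj θ hrel
end
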